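/- arXiv:2412.09095 — 12 statements merged into one kernel-verified Lean document; each statement's English description precedes it below -/
import Mathlib

section
/- Let q ≥ 0 be an integer, let a < b be real numbers, and let L be the shifted Legendre polynomial of degree q on (a, b). Then ∫_a^b (t − a)·L(t)·L'(t) dt = (b − a)·q/(2q + 1), where L' denotes the derivative of L. -/
/-!
Write `I = ∫ (t - a) L L'` and `J = ∫ L²`. The polynomial `(t - a) L' - q L` has degree `< q`
(the leading terms cancel), so orthogonality of `L` gives `I = q J`. On the other hand
`((t - a) L²)' = L² + 2 (t - a) L L'`, and integrating over `(a, b)` with `L(b) = 1` gives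
`b - a = J + 2 I`. Eliminating `J` yields `I = (b - a) q / (2q + 1)`.
-/

open MeasureTheory Polynomial Set

namespace Polynomial

variable {R : Type*} [CommRing R]

lemma coeff_X_mul_derivative (p : R[X]) (n : ℕ) : (X * derivative p).coeff n = n * p.coeff n := by
  cases n with
  | zero => simp
  | succ k => rw [coeff_X_mul, coeff_derivative]; push_cast; ring

lemma degree_X_sub_C_mul_derivative_sub_lt {q : ℕ} (a : R) {p : R[X]} (hp : p.natDegree ≤ q) :
    ((X - C a) * derivative p - C (q : R) * p).degree < (q : WithBot ℕ) := by
  rw [degree_lt_iff_coeff_zero]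
  intro m hm
  have hsucc : p.coeff (m + 1) = 0 := coeff_eq_zero_of_natDegree_lt (by omega)
  rw [sub_mul, coeff_sub, coeff_sub, coeff_X_mul_derivative, coeff_C_mul, coeff_C_mul,
    coeff_derivative, hsucc]
  rcases hm.eq_or_lt with rfl | hlt
  · ring
  · rw [coeff_eq_zero_of_natDegree_lt (hp.trans_lt hlt)]; ring

lemma integral_Ioo_eval_derivative (p : ℝ[X]) {a b : ℝ} (hab : a ≤ b) :
    ∫ t in Ioo a b, (derivative p).eval t = p.eval b - p.eval a := by
  rw [← integral_Ioc_eq_integral_Ioo, ← intervalIntegral.integral_of_le hab,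
    intervalIntegral.integral_eq_sub_of_hasDerivAt (fun x _ => p.hasDerivAt x)
      ((derivative p).continuous.intervalIntegrable a b)]

lemma integral_Ioo_eval_mul_eq_zero_of_degree_lt {q : ℕ} {a b : ℝ} {L p : ℝ[X]}
    (horth : ∀ j : ℕ, j < q → ∫ t in Ioo a b, L.eval t * t ^ j = 0) (hp : p.degree < q) :
    ∫ t in Ioo a b, L.eval t * p.eval t = 0 := by
  rcases eq_or_ne p 0 with rfl | hp0
  · simp
  have hnat : p.natDegree < q := (natDegree_lt_iff_degree_lt hp0).2 hp
  have hterm : ∀ j ∈ Finset.range q,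
      ∫ t in Ioo a b, L.eval t * (p.coeff j * t ^ j) = 0 := fun j hj => by
    simp_rw [mul_left_comm _ (p.coeff j), integral_const_mul, horth j (Finset.mem_range.1 hj),
      mul_zero]
  simp_rw [eval_eq_sum_range' hnat, Finset.mul_sum]
  rw [integral_finsetSum _ fun j _ => ?_, Finset.sum_eq_zero hterm]
  exact (by fun_prop : Continuous _).integrableOn_Icc.mono_set Ioo_subset_Icc_self

end Polynomial

/-- If `L` is the shifted Legendre polynomial of degree `q` on `(a, b)`, then
`∫_a^b (t − a) L(t) L'(t) dt = (b − a) q/(2q + 1)`. -/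
theorem shifted_legendre_weighted_deriv_integral (q : ℕ) (a b : ℝ) (hab : a < b)
    (L : Polynomial ℝ) (hdeg : L.natDegree ≤ q)
    (horth : ∀ j : ℕ, j < q → ∫ t in Set.Ioo a b, L.eval t * t ^ j = 0)
    (hb : L.eval b = 1) :
    ∫ t in Set.Ioo a b, (t - a) * L.eval t * (Polynomial.derivative L).eval t
      = (b - a) * (q : ℝ) / (2 * (q : ℝ) + 1) := by
  have hint : ∀ f : ℝ → ℝ, Continuous f → IntegrableOn f (Ioo a b) := fun f hf =>
    hf.integrableOn_Icc.mono_set Ioo_subset_Icc_self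
  set I := ∫ t in Ioo a b, (t - a) * L.eval t * (derivative L).eval t
  set J := ∫ t in Ioo a b, L.eval t * L.eval t
  have hIJ : I = q * J := by
    have h := integral_Ioo_eval_mul_eq_zero_of_degree_lt horth
      (degree_X_sub_C_mul_derivative_sub_lt a hdeg)
    rw [← sub_eq_zero, ← integral_const_mul, ← integral_sub (hint _ (by fun_prop))
      (hint _ (by fun_prop)), ← h]
    congr 1 with t
    simp only [eval_sub, eval_mul, eval_X, eval_C]
    ring
  have hsum : b - a = J + 2 * I := by
    have h := integral_Ioo_eval_derivative ((X - C a) * L ^ 2) hab.le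
    simp only [eval_mul, eval_sub, eval_pow, eval_X, eval_C, hb, sub_self, zero_mul, one_pow,
      mul_one, sub_zero] at h
    rw [← h, ← integral_const_mul, ← integral_add (hint _ (by fun_prop)) (hint _ (by fun_prop))]
    congr 1 with t
    simp only [derivative_mul, derivative_sub, derivative_X, derivative_C, derivative_pow,
      eval_add, eval_mul, eval_sub, eval_pow, eval_X, eval_C, eval_one, eval_zero]
    ring
  field_simp
  linear_combination hIJ - q * hsum
end

section
/- Let q ≥ 1 be an integer, let a < b be real numbers, and let L be the shifted Legendre polynomial of degree q on (a, b). Let H be a real inner product space, let v be an H-valued polynomial of degree at most q, and let g be an L²(a, b)-orthogonal projection of v onto H-valued polynomials of degree at most q − 1. Then for every real t, v(t) − g(t) = ((2q + 1)/(b − a)) · L(t) · ∫_a^b L(s) v(s) ds, where the integral is a Bochner integral in H. -/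
/-!
Real polynomials of degree at most `q` that are `L²(a, b)`-orthogonal to `1, t, …, t^(q-1)`
form a line: for two of them, the combination with vanishing `t^q`-coefficient is orthogonal
to itself. As `L(b) = 1`, each such `p` equals `p(b) • L`; applied to the components
`⟪v - g, u⟫` this gives `v - g = L • (v(b) - g(b))`. Testing against `L` kills `g`, so
`∫ L v = ‖L‖² • (v(b) - g(b))`, and `‖L‖² = (b - a)/(2q + 1)` comes from integrating
`((t - a) L²)' = L² + 2 L (t - a) L'`, where `∫ L (t - a) L' = q ‖L‖²` because `(t - a) L'`
is `q L` up to terms of degree `< q`.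
-/

open MeasureTheory

/-- An `H`-valued polynomial of degree at most `k`: a function of the form
`t ↦ ∑_{i=0}^{k} t^i • cᵢ` with coefficients `cᵢ ∈ H`. -/
def IsPolyDeg {H : Type*} [NormedAddCommGroup H] [InnerProductSpace ℝ H]
    (k : ℕ) (v : ℝ → H) : Prop :=
  ∃ c : ℕ → H, ∀ t : ℝ, v t = ∑ i ∈ Finset.range (k + 1), t ^ i • c i

/-- `g` is an `L²(a, b)`-orthogonal projection of `f` onto `H`-valued polynomials of
degree at most `k`. -/
def IsL2ProjOn {H : Type*} [NormedAddCommGroup H] [InnerProductSpace ℝ H]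
    (a b : ℝ) (k : ℕ) (f g : ℝ → H) : Prop :=
  IsPolyDeg k g ∧
    ∀ r : ℝ → H, IsPolyDeg k r →
      ∫ t in Set.Ioo a b, (inner ℝ (f t - g t) (r t) : ℝ) = 0

open Polynomial

section Legendre

variable {a b : ℝ} {q : ℕ}

theorem integral_Ioo_eq_intervalIntegral {E : Type*} [NormedAddCommGroup E] [NormedSpace ℝ E]
    (hab : a ≤ b) (f : ℝ → E) : ∫ t in Set.Ioo a b, f t = ∫ t in a..b, f t := by
  rw [intervalIntegral.integral_of_le hab, integral_Ioc_eq_integral_Ioo]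

theorem integral_eval_mul_eq_coeff_mul {p : ℝ[X]}
    (hp : ∀ j < q, ∫ t in a..b, p.eval t * t ^ j = 0) {r : ℝ[X]} (hr : r.natDegree ≤ q) :
    ∫ t in a..b, p.eval t * r.eval t = r.coeff q * ∫ t in a..b, p.eval t * t ^ q := by
  have hterm : ∀ i, IntervalIntegrable (fun t => p.eval t * t ^ i) volume a b := fun i =>
    (p.continuous.mul (continuous_pow i)).intervalIntegrable _ _
  simp_rw [eval_eq_sum_range' (Nat.lt_succ_of_le hr), Finset.mul_sum, mul_left_comm (p.eval _)]
  rw [intervalIntegral.integral_finsetSum fun i _ => (hterm i).const_mul _,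
    Finset.sum_range_succ, Finset.sum_eq_zero fun i hi => ?_, zero_add,
    intervalIntegral.integral_const_mul]
  · rw [intervalIntegral.integral_const_mul, hp i (Finset.mem_range.mp hi), mul_zero]

theorem eq_zero_of_integral_mul_self_eq_zero (hab : a < b) {p : ℝ[X]}
    (h : ∫ t in a..b, p.eval t * p.eval t = 0) : p = 0 := by
  refine p.eq_zero_of_infinite_isRoot ((Set.Ioo_infinite hab).mono fun c hc => ?_)
  by_contra hpc
  have hpos : 0 < ∫ t in a..b, p.eval t * p.eval t :=
    intervalIntegral.integral_pos hab (p.continuous.mul p.continuous).continuousOn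
      (fun t _ => mul_self_nonneg _) ⟨c, Set.Ioo_subset_Icc_self hc, mul_self_pos.mpr hpc⟩
  exact hpos.ne' h

theorem eq_C_mul_of_orthogonal (hab : a < b) {L p : ℝ[X]} (hLdeg : L.natDegree ≤ q)
    (hLorth : ∀ j < q, ∫ t in a..b, L.eval t * t ^ j = 0) (hLq : L.coeff q ≠ 0)
    (hpdeg : p.natDegree ≤ q) (hporth : ∀ j < q, ∫ t in a..b, p.eval t * t ^ j = 0) :
    p = C (p.coeff q / L.coeff q) * L := by
  set d := p - C (p.coeff q / L.coeff q) * L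
  have hdeg : d.natDegree ≤ q :=
    (natDegree_sub_le_of_le hpdeg ((natDegree_C_mul_le _ _).trans hLdeg)).trans (max_self q).le
  have hdq : d.coeff q = 0 := by
    simp only [d, coeff_sub, coeff_C_mul, div_mul_cancel₀ _ hLq, sub_self]
  have hdorth : ∀ j < q, ∫ t in a..b, d.eval t * t ^ j = 0 := fun j hj => by
    have hint : ∀ f : ℝ[X], IntervalIntegrable (fun t => f.eval t * t ^ j) volume a b :=
      fun f => (f.continuous.mul (continuous_pow j)).intervalIntegrable _ _
    simp only [d, eval_sub, eval_mul, eval_C, sub_mul, mul_assoc]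
    rw [intervalIntegral.integral_sub (hint p) ((hint L).const_mul _),
      intervalIntegral.integral_const_mul, hporth j hj, hLorth j hj, mul_zero, sub_zero]
  have hd : d = 0 := eq_zero_of_integral_mul_self_eq_zero hab <| by
    rw [integral_eval_mul_eq_coeff_mul hdorth hdeg, hdq, zero_mul]
  exact sub_eq_zero.mp hd

theorem coeff_ne_zero_of_orthogonal (hab : a < b) {L : ℝ[X]} (hLdeg : L.natDegree ≤ q)
    (hLorth : ∀ j < q, ∫ t in a..b, L.eval t * t ^ j = 0) (hL : L ≠ 0) : L.coeff q ≠ 0 :=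
  fun hLq => hL <| eq_zero_of_integral_mul_self_eq_zero hab <| by
    rw [integral_eval_mul_eq_coeff_mul hLorth hLdeg, hLq, zero_mul]

theorem eq_C_eval_mul_of_orthogonal (hab : a < b) {L p : ℝ[X]} (hLdeg : L.natDegree ≤ q)
    (hLorth : ∀ j < q, ∫ t in a..b, L.eval t * t ^ j = 0) (hLb : L.eval b = 1)
    (hpdeg : p.natDegree ≤ q) (hporth : ∀ j < q, ∫ t in a..b, p.eval t * t ^ j = 0) :
    p = C (p.eval b) * L := by
  have hL0 : L ≠ 0 := fun h => by simp [h] at hLb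
  have hp := eq_C_mul_of_orthogonal hab hLdeg hLorth
    (coeff_ne_zero_of_orthogonal hab hLdeg hLorth hL0) hpdeg hporth
  conv_rhs => rw [hp, eval_mul, eval_C, hLb, mul_one, ← hp]

theorem natDegree_X_sub_C_mul_derivative_le (a : ℝ) (p : ℝ[X]) :
    ((X - C a) * derivative p).natDegree ≤ p.natDegree := by
  rcases Nat.eq_zero_or_pos p.natDegree with h | h
  · rw [eq_C_of_natDegree_eq_zero h]
    simp
  · calc _ ≤ 1 + (p.natDegree - 1) :=
          natDegree_mul_le.trans (add_le_add (natDegree_X_sub_C_le a) (natDegree_derivative_le p))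
      _ = p.natDegree := by omega

theorem coeff_X_sub_C_mul_derivative (a : ℝ) {p : ℝ[X]} (hp : p.natDegree ≤ q) :
    ((X - C a) * derivative p).coeff q = q * p.coeff q := by
  have htop : p.coeff (q + 1) = 0 := coeff_eq_zero_of_natDegree_lt (by omega)
  rw [sub_mul, coeff_sub, coeff_C_mul, coeff_derivative, htop, zero_mul, mul_zero, sub_zero]
  cases q with
  | zero => simp
  | succ n => rw [coeff_X_mul, coeff_derivative]; push_cast; ring

theorem integral_mul_self_eq_of_orthogonal {L : ℝ[X]} (hLdeg : L.natDegree ≤ q)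
    (hLorth : ∀ j < q, ∫ t in a..b, L.eval t * t ^ j = 0) (hLb : L.eval b = 1) :
    ∫ t in a..b, L.eval t * L.eval t = (b - a) / (2 * q + 1) := by
  set r := (X - C a) * derivative L
  have hr : ∫ t in a..b, L.eval t * r.eval t = q * ∫ t in a..b, L.eval t * L.eval t := by
    rw [integral_eval_mul_eq_coeff_mul hLorth
        ((natDegree_X_sub_C_mul_derivative_le a L).trans hLdeg),
      integral_eval_mul_eq_coeff_mul hLorth hLdeg, coeff_X_sub_C_mul_derivative a hLdeg, mul_assoc]
  set P := (X - C a) * L ^ 2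
  have hP : ∀ t, (derivative P).eval t = L.eval t * L.eval t + 2 * (L.eval t * r.eval t) := by
    intro t
    simp only [P, r, derivative_mul, derivative_sub, derivative_X, derivative_C, derivative_pow,
      eval_add, eval_mul, eval_sub, eval_pow, eval_X, eval_C, eval_one, eval_zero]
    ring
  have hftc : ∫ t in a..b, (derivative P).eval t = b - a := by
    rw [intervalIntegral.integral_eq_sub_of_hasDerivAt (fun t _ => P.hasDerivAt t)
      (P.derivative.continuous.intervalIntegrable _ _)]
    simp [P, hLb]
  have hcont : ∀ f : ℝ[X], IntervalIntegrable (fun t => L.eval t * f.eval t) volume a b :=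
    fun f => (L.continuous.mul f.continuous).intervalIntegrable _ _
  simp_rw [hP] at hftc
  rw [intervalIntegral.integral_add (hcont L) ((hcont r).const_mul 2),
    intervalIntegral.integral_const_mul, hr] at hftc
  rw [eq_div_iff (by positivity)]
  linarith

end Legendre

section VectorValued

variable {H : Type*} [NormedAddCommGroup H] [InnerProductSpace ℝ H]

theorem IsPolyDeg.continuous {k : ℕ} {v : ℝ → H} (hv : IsPolyDeg k v) : Continuous v := by
  obtain ⟨c, hc⟩ := hv
  rw [funext hc]
  exact continuous_finsetSum _ fun i _ => (continuous_pow i).smul continuous_const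

theorem IsPolyDeg.mono {k l : ℕ} {v : ℝ → H} (hv : IsPolyDeg k v) (hkl : k ≤ l) :
    IsPolyDeg l v := by
  obtain ⟨c, hc⟩ := hv
  refine ⟨fun i => if i < k + 1 then c i else 0, fun t => ?_⟩
  rw [hc, ← Finset.sum_range_add_sum_Ico _ (by omega : k + 1 ≤ l + 1),
    Finset.sum_eq_zero (s := Finset.Ico _ _) fun i hi => ?_, add_zero]
  · exact Finset.sum_congr rfl fun i hi => by simp [Finset.mem_range.mp hi]
  · simp [show ¬i < k + 1 from by simp at hi; omega]

theorem IsPolyDeg.sub {k : ℕ} {v g : ℝ → H} (hv : IsPolyDeg k v) (hg : IsPolyDeg k g) :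
    IsPolyDeg k (fun t => v t - g t) := by
  obtain ⟨c, hc⟩ := hv
  obtain ⟨d, hd⟩ := hg
  exact ⟨fun i => c i - d i, fun t => by simp only [hc, hd, smul_sub, Finset.sum_sub_distrib]⟩

theorem isPolyDeg_pow_smul {k j : ℕ} (hj : j ≤ k) (u : H) :
    IsPolyDeg k (fun t => t ^ j • u) :=
  ⟨fun i => if i = j then u else 0, fun t => by simp [smul_ite, Nat.lt_succ_of_le hj]⟩

theorem IsPolyDeg.exists_inner_eq_eval {k : ℕ} {v : ℝ → H} (hv : IsPolyDeg k v) (u : H) :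
    ∃ p : ℝ[X], p.natDegree ≤ k ∧ ∀ t, inner ℝ (v t) u = p.eval t := by
  obtain ⟨c, hc⟩ := hv
  refine ⟨∑ i ∈ Finset.range (k + 1), C (inner ℝ (c i) u) * X ^ i,
    natDegree_sum_le_of_forall_le _ _ fun i hi => ?_, fun t => ?_⟩
  · exact (natDegree_C_mul_X_pow_le _ _).trans (Nat.lt_succ_iff.mp (Finset.mem_range.mp hi))
  · simp only [hc, sum_inner, real_inner_smul_left, eval_finsetSum, eval_mul, eval_C, eval_pow,
      eval_X, mul_comm]

theorem integral_eval_smul_eq_zero_of_orthogonal {a b : ℝ} {q k : ℕ} [CompleteSpace H]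
    {L : ℝ[X]} (hLorth : ∀ j < q, ∫ t in Set.Ioo a b, L.eval t * t ^ j = 0)
    {g : ℝ → H} (hg : IsPolyDeg k g) (hkq : k < q) :
    ∫ t in Set.Ioo a b, L.eval t • g t = 0 := by
  obtain ⟨c, hc⟩ := hg
  simp_rw [hc, Finset.smul_sum, smul_smul]
  refine (integral_finsetSum _ fun i _ => ?_).trans (Finset.sum_eq_zero fun i hi => ?_)
  · exact ((L.continuous.mul (continuous_pow i)).smul continuous_const).integrableOn_Icc.mono_set
      Set.Ioo_subset_Icc_self
  · rw [integral_smul_const, hLorth i (by simp at hi; omega), zero_smul]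

theorem IsPolyDeg.eq_eval_smul_of_orthogonal {a b : ℝ} {q : ℕ} (hab : a < b) {L : ℝ[X]}
    (hLdeg : L.natDegree ≤ q) (hLorth : ∀ j < q, ∫ t in a..b, L.eval t * t ^ j = 0)
    (hLb : L.eval b = 1) {w : ℝ → H} (hw : IsPolyDeg q w)
    (hworth : ∀ j < q, ∀ u : H, ∫ t in Set.Ioo a b, inner ℝ (w t) (t ^ j • u) = 0)
    (t : ℝ) :
    w t = L.eval t • w b := by
  refine ext_inner_right ℝ fun u => ?_
  obtain ⟨p, hpdeg, hp⟩ := hw.exists_inner_eq_eval u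
  have hporth : ∀ j < q, ∫ t in a..b, p.eval t * t ^ j = 0 := fun j hj => by
    rw [← integral_Ioo_eq_intervalIntegral hab.le, ← hworth j hj u]
    simp_rw [real_inner_smul_right, hp, mul_comm]
  rw [real_inner_smul_left, hp, hp]
  conv_lhs => rw [eq_C_eval_mul_of_orthogonal hab hLdeg hLorth hLb hpdeg hporth]
  rw [eval_mul, eval_C, mul_comm]

end VectorValued

/-- If `L` is the shifted Legendre polynomial of degree `q ≥ 1` on `(a, b)`, `v` is an
`H`-valued polynomial of degree at most `q`, and `g` is an `L²(a,b)`-orthogonal projection of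
`v` onto `H`-valued polynomials of degree at most `q − 1`, then
`v(t) − g(t) = ((2q+1)/(b−a)) L(t) ∫_a^b L(s) v(s) ds` for every real `t`. -/
theorem projection_error_formula {H : Type*} [NormedAddCommGroup H]
    [InnerProductSpace ℝ H] [CompleteSpace H]
    (q : ℕ) (hq : 1 ≤ q) (a b : ℝ) (hab : a < b)
    (L : Polynomial ℝ) (hLdeg : L.natDegree ≤ q)
    (hLorth : ∀ j : ℕ, j < q → ∫ t in Set.Ioo a b, L.eval t * t ^ j = 0)
    (hLb : L.eval b = 1)
    (v g : ℝ → H) (hv : IsPolyDeg q v) (hg : IsL2ProjOn a b (q - 1) v g) :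
    ∀ t : ℝ, v t - g t =
      ((2 * (q : ℝ) + 1) / (b - a)) •
        (L.eval t • ∫ s in Set.Ioo a b, L.eval s • v s) := by
  intro t
  obtain ⟨hgdeg, hgorth⟩ := hg
  have hLorth' : ∀ j < q, ∫ t in a..b, L.eval t * t ^ j = 0 := fun j hj => by
    rw [← integral_Ioo_eq_intervalIntegral hab.le, hLorth j hj]
  have hw : ∀ s, v s - g s = L.eval s • (v b - g b) :=
    (hv.sub (hgdeg.mono (Nat.sub_le q 1))).eq_eval_smul_of_orthogonal hab hLdeg hLorth' hLb
      fun j hj u => hgorth _ (isPolyDeg_pow_smul (by omega) u)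
  have hint : ∫ s in Set.Ioo a b, L.eval s • v s
      = (∫ s in a..b, L.eval s * L.eval s) • (v b - g b) := by
    have hvw : ∀ s, L.eval s • v s = (L.eval s * L.eval s) • (v b - g b) + L.eval s • g s :=
      fun s => by rw [mul_smul, ← hw s, ← smul_add, sub_add_cancel]
    have hIoo : ∀ {f : ℝ → H}, Continuous f → IntegrableOn f (Set.Ioo a b) :=
      fun hf => hf.integrableOn_Icc.mono_set Set.Ioo_subset_Icc_self
    have hgc := hgdeg.continuous
    simp_rw [hvw]
    rw [integral_add (hIoo (by fun_prop)) (hIoo (by fun_prop)),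
      integral_eval_smul_eq_zero_of_orthogonal hLorth hgdeg (by omega), add_zero,
      integral_smul_const, integral_Ioo_eq_intervalIntegral hab.le]
  have hba : b - a ≠ 0 := sub_ne_zero.mpr hab.ne'
  rw [hint, integral_mul_self_eq_of_orthogonal hLdeg hLorth' hLb, smul_smul, smul_smul, hw t]
  congr 1
  field_simp
end

section
/- Let q ≥ 1 be an integer, let a < b be real numbers, set τ = b − a, ζ_q = 1/(4(2q + 1)), λ = ζ_q/τ, fix θ ∈ ℝ, and define φ(t) = θ − λ(t − a). Let H be a real inner product space, let w be an H-valued polynomial of degree at most q − 1, and let g be an L²(a, b)-orthogonal projection of the function t ↦ φ(t)·w(t) onto H-valued polynomials of degree at most q − 1. Then ‖φ(a)w(a) − g(a)‖_H ≤ (1/(4·√(2q + 1)·√τ)) · (∫_a^b ‖w(t)‖_H² dt)^{1/2}. -/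
/-!
The error `e = φ w - g` is an `H`-valued polynomial of degree `≤ q` orthogonal to all polynomials
of degree `< q`, hence a fixed vector times the Legendre polynomial of degree `q` on `[a, b]`.
For such functions Rodrigues' formula and a Beta integral give the exact endpoint identity
`(2q + 1) ∫ ‖e‖² = τ ‖e a‖²`. On the other hand `e ⊥ θ w - g`, so
`∫ ‖e‖² = -λ ∫ (t - a) ⟪e, w⟫ ≤ λτ ∫ ‖e‖ ‖w‖`, and Young's inequality gives
`∫ ‖e‖² ≤ ζ_q² ∫ ‖w‖²`. Together, `‖e a‖² ≤ (2q + 1) ζ_q² / τ ∫ ‖w‖² = ∫ ‖w‖² / (16 (2q + 1) τ)`.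
-/

open MeasureTheory

open Polynomial
open scoped RealInnerProductSpace

open scoped Nat in
theorem integral_sub_pow_mul_sub_pow (a b : ℝ) (m n : ℕ) :
    ∫ t in a..b, (t - a) ^ m * (b - t) ^ n =
      (m ! * n ! / (m + n + 1)! : ℝ) * (b - a) ^ (m + n + 1) := by
  induction n generalizing m with
  | zero =>
    simp only [pow_zero, mul_one, intervalIntegral.integral_comp_sub_right (fun t => t ^ m),
      sub_self, integral_pow, Nat.factorial_succ]
    push_cast
    field_simp
    ring
  | succ n ih =>
    have hibp : ∫ t in a..b, (b - t) ^ (n + 1) * (t - a) ^ m =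
        (n + 1) / (m + 1) * ∫ t in a..b, (t - a) ^ (m + 1) * (b - t) ^ n := by
      rw [intervalIntegral.integral_mul_deriv_eq_deriv_mul
        (u' := fun t => -((n + 1) * (b - t) ^ n)) (v := fun t => (t - a) ^ (m + 1) / (m + 1))]
      · simp only [sub_self, zero_pow (Nat.succ_ne_zero _), zero_div, zero_mul, mul_zero,
          zero_sub, ← intervalIntegral.integral_neg,
          ← intervalIntegral.integral_const_mul]
        congr 1
        funext t
        ring
      · intro t _
        simpa using ((hasDerivAt_id t).const_sub b).fun_pow (n + 1)
      · intro t _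
        exact ((((hasDerivAt_id t).sub_const a).fun_pow (m + 1)).div_const ((m : ℝ) + 1))
          |>.congr_deriv (by push_cast; field_simp; simp)
      · exact Continuous.intervalIntegrable (by fun_prop) _ _
      · exact Continuous.intervalIntegrable (by fun_prop) _ _
    rw [show (fun t => (t - a) ^ m * (b - t) ^ (n + 1)) = fun t => (b - t) ^ (n + 1) * (t - a) ^ m
      from funext fun t => mul_comm _ _, hibp, ih, Nat.factorial_succ m, Nat.factorial_succ n,
      show m + 1 + n + 1 = m + (n + 1) + 1 by ring]
    push_cast
    field_simp

namespace Polynomial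

open scoped Nat

theorem integral_eval_derivative_mul_of_eval_eq_zero {a b : ℝ} {u : ℝ[X]} (ha : u.eval a = 0)
    (hb : u.eval b = 0) (v : ℝ[X]) :
    ∫ t in a..b, (derivative u).eval t * v.eval t =
      -∫ t in a..b, u.eval t * (derivative v).eval t := by
  have hparts := intervalIntegral.integral_deriv_mul_eq_sub (fun t _ => u.hasDerivAt t)
    (fun t _ => v.hasDerivAt t) ((derivative u).continuous.intervalIntegrable a b)
    ((derivative v).continuous.intervalIntegrable a b)
  rw [intervalIntegral.integral_add (by apply Continuous.intervalIntegrable; fun_prop)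
    (by apply Continuous.intervalIntegrable; fun_prop), ha, hb] at hparts
  linarith

theorem integral_eval_iterate_derivative_mul {a b : ℝ} {P : ℝ[X]} {n : ℕ}
    (hP : ∀ i < n, (derivative^[i] P).eval a = 0 ∧ (derivative^[i] P).eval b = 0) (v : ℝ[X]) :
    ∫ t in a..b, (derivative^[n] P).eval t * v.eval t =
      (-1) ^ n * ∫ t in a..b, P.eval t * (derivative^[n] v).eval t := by
  induction n generalizing P with
  | zero => simp
  | succ n ih =>
    have hP' : ∀ i < n, (derivative^[i] (derivative P)).eval a = 0 ∧
        (derivative^[i] (derivative P)).eval b = 0 := fun i hi => hP (i + 1) (by omega)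
    obtain ⟨ha, hb⟩ : P.eval a = 0 ∧ P.eval b = 0 := hP 0 n.succ_pos
    rw [Function.iterate_succ_apply, ih hP', integral_eval_derivative_mul_of_eval_eq_zero ha hb,
      ← Function.iterate_succ_apply' derivative, pow_succ]
    ring

theorem eval_iterate_derivative_eq_zero_of_pow_dvd {R : Type*} [CommRing R] {r : R} {P : R[X]}
    {q i : ℕ} (h : (X - C r) ^ q ∣ P) (hi : i < q) : (derivative^[i] P).eval r = 0 := by
  obtain ⟨Q, hQ⟩ := pow_sub_dvd_iterate_derivative_of_pow_dvd i h
  simp [hQ, zero_pow (Nat.sub_ne_zero_of_lt hi)]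

theorem eq_zero_of_integral_eval_mul_self_eq_zero {a b : ℝ} (hab : a < b) {p : ℝ[X]}
    (h : ∫ t in a..b, p.eval t * p.eval t = 0) : p = 0 := by
  rw [intervalIntegral.integral_of_le hab.le] at h
  have hae : (fun t => p.eval t * p.eval t) =ᵐ[volume.restrict (Set.Ioo a b)] 0 :=
    ae_restrict_of_ae_restrict_of_subset Set.Ioo_subset_Ioc_self <|
      (integral_eq_zero_iff_of_nonneg (fun t => mul_self_nonneg _)
        (p.continuous.mul p.continuous).integrableOn_Ioc).mp h
  have hroots := Measure.eqOn_Ioo_of_ae_eq (μ := volume) hae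
    (p.continuous.mul p.continuous).continuousOn continuousOn_const
  refine eq_zero_of_infinite_isRoot p ((Set.Ioo_infinite hab).mono fun t ht => ?_)
  exact mul_self_eq_zero.mp (hroots ht)

/-- Rodrigues' formula for the Legendre polynomial of degree `q` on `[a, b]`, scaled by
`q! (b - a) ^ q`. -/
noncomputable def intervalLegendre (q : ℕ) (a b : ℝ) : ℝ[X] :=
  derivative^[q] ((X - C a) ^ q * (X - C b) ^ q)

section

variable (q : ℕ) (a b : ℝ)

theorem integral_intervalLegendre_mul (v : ℝ[X]) :
    ∫ t in a..b, (intervalLegendre q a b).eval t * v.eval t =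
      (-1) ^ q * ∫ t in a..b, ((X - C a) ^ q * (X - C b) ^ q).eval t * (derivative^[q] v).eval t :=
  integral_eval_iterate_derivative_mul (fun _ hi =>
    ⟨eval_iterate_derivative_eq_zero_of_pow_dvd (dvd_mul_right _ _) hi,
      eval_iterate_derivative_eq_zero_of_pow_dvd (dvd_mul_left _ _) hi⟩) v

theorem integral_intervalLegendre_mul_eq_zero {v : ℝ[X]} (hv : v.natDegree < q) :
    ∫ t in a..b, (intervalLegendre q a b).eval t * v.eval t = 0 := by
  simp [integral_intervalLegendre_mul, iterate_derivative_eq_zero hv]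

theorem intervalLegendre_eval_left : (intervalLegendre q a b).eval a = q ! * (a - b) ^ q := by
  rw [intervalLegendre, iterate_derivative_mul, eval_finsetSum, Finset.sum_eq_single 0]
  · simp [iterate_derivative_X_sub_pow_self]
  · intro k hk hk0
    have : q - (q - k) = k := by have := Finset.mem_range.mp hk; omega
    simp [iterate_derivative_X_sub_pow, this, zero_pow hk0]
  · simp

theorem monic_X_sub_C_pow_mul_X_sub_C_pow : ((X - C a) ^ q * (X - C b) ^ q).Monic :=
  ((monic_X_sub_C a).pow q).mul ((monic_X_sub_C b).pow q)

theorem natDegree_X_sub_C_pow_mul_X_sub_C_pow :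
    ((X - C a) ^ q * (X - C b) ^ q).natDegree = 2 * q := by
  rw [((monic_X_sub_C a).pow q).natDegree_mul ((monic_X_sub_C b).pow q)]
  simp [two_mul]

theorem natDegree_intervalLegendre_le : (intervalLegendre q a b).natDegree ≤ q := by
  have := natDegree_iterate_derivative ((X - C a) ^ q * (X - C b) ^ q) q
  rw [natDegree_X_sub_C_pow_mul_X_sub_C_pow] at this
  unfold intervalLegendre
  omega

theorem iterate_derivative_intervalLegendre :
    derivative^[q] (intervalLegendre q a b) = C ((2 * q)! : ℝ) := by
  set S := (X - C a) ^ q * (X - C b) ^ q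
  have hS : S.natDegree = 2 * q := natDegree_X_sub_C_pow_mul_X_sub_C_pow q a b
  rw [intervalLegendre, ← Function.iterate_add_apply, ← two_mul]
  have hdeg : (derivative^[2 * q] S).natDegree ≤ 0 := by
    have := natDegree_iterate_derivative S (2 * q)
    omega
  rw [eq_C_of_natDegree_le_zero hdeg, coeff_iterate_derivative, zero_add, Nat.descFactorial_self,
    ← hS, (monic_X_sub_C_pow_mul_X_sub_C_pow q a b).coeff_natDegree]
  simp

theorem factorial_mul_coeff_intervalLegendre :
    q ! * (intervalLegendre q a b).coeff q = (2 * q)! := by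
  have := congrArg (coeff · 0) (iterate_derivative_intervalLegendre q a b)
  simpa [coeff_iterate_derivative, Nat.descFactorial_self] using this

theorem coeff_intervalLegendre_ne_zero : (intervalLegendre q a b).coeff q ≠ 0 :=
  right_ne_zero_of_mul (by rw [factorial_mul_coeff_intervalLegendre]; positivity)

theorem integral_intervalLegendre_sq :
    (2 * q + 1) * ∫ t in a..b, (intervalLegendre q a b).eval t ^ 2 =
      (b - a) * (intervalLegendre q a b).eval a ^ 2 := by
  have hS : ∀ t, ((X - C a) ^ q * (X - C b) ^ q).eval t =
      (-1) ^ q * ((t - a) ^ q * (b - t) ^ q) := by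
    intro t
    simp only [eval_mul, eval_pow, eval_sub, eval_X, eval_C]
    rw [← neg_sub b t, neg_pow]
    ring
  have hsign : ((-1 : ℝ) ^ q) * (-1) ^ q = 1 := by rw [← mul_pow]; norm_num
  have hfac : ((2 * q + 1)! : ℝ) = (2 * q + 1) * (2 * q)! := by
    rw [Nat.factorial_succ]; push_cast; ring
  have hint : ∫ t in a..b, (intervalLegendre q a b).eval t ^ 2 =
      (2 * q)! * ((-1) ^ q * (-1) ^ q) * ∫ t in a..b, (t - a) ^ q * (b - t) ^ q := by
    simp only [sq, integral_intervalLegendre_mul, iterate_derivative_intervalLegendre, eval_C, hS,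
      intervalIntegral.integral_mul_const, intervalIntegral.integral_const_mul]
    ring
  have hsq : ((a - b) ^ q) ^ 2 = (b - a) ^ (2 * q) := by
    rw [← pow_mul, mul_comm, pow_mul, pow_mul, show (a - b) ^ 2 = (b - a) ^ 2 by ring]
  rw [hint, hsign, integral_sub_pow_mul_sub_pow, intervalLegendre_eval_left,
    show q + q + 1 = 2 * q + 1 by ring, hfac, mul_pow, hsq, pow_succ]
  field_simp

end

theorem exists_eq_C_mul_intervalLegendre {q : ℕ} {a b : ℝ} (hab : a < b) {p : ℝ[X]}
    (hp : p.natDegree ≤ q)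
    (horth : ∀ v : ℝ[X], v.natDegree < q → ∫ t in a..b, p.eval t * v.eval t = 0) :
    ∃ c, p = C c * intervalLegendre q a b := by
  set L := intervalLegendre q a b
  set c := p.coeff q / L.coeff q
  refine ⟨c, sub_eq_zero.mp ?_⟩
  set d := p - C c * L
  by_contra hd0
  have hdq : d.coeff q = 0 := by
    rw [coeff_sub, coeff_C_mul, div_mul_cancel₀ _ (coeff_intervalLegendre_ne_zero q a b), sub_self]
  have hdlt : d.natDegree < q := by
    refine lt_of_le_of_ne ((natDegree_sub_le_of_le hp (natDegree_C_mul_le _ _ |>.trans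
      (natDegree_intervalLegendre_le q a b))).trans_eq (max_self q)) fun h => hd0 ?_
    rw [← leadingCoeff_eq_zero, leadingCoeff, h, hdq]
  refine hd0 (eq_zero_of_integral_eval_mul_self_eq_zero hab ?_)
  have hsplit : ∀ t, d.eval t * d.eval t = p.eval t * d.eval t - c * (L.eval t * d.eval t) := by
    intro t
    simp only [d, eval_sub, eval_mul, eval_C]
    ring
  simp only [hsplit]
  rw [intervalIntegral.integral_sub (by apply Continuous.intervalIntegrable; fun_prop)
    (by apply Continuous.intervalIntegrable; fun_prop), intervalIntegral.integral_const_mul,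
    horth d hdlt, integral_intervalLegendre_mul_eq_zero q a b hdlt]
  simp

end Polynomial

section

variable {H : Type*} [NormedAddCommGroup H] [InnerProductSpace ℝ H]

namespace IsPolyDeg

variable {k : ℕ} {v w : ℝ → H}

theorem continuous_s6 (hv : IsPolyDeg k v) : Continuous v := by
  obtain ⟨c, hc⟩ := hv
  rw [funext hc]
  fun_prop

theorem mono_s6 (hv : IsPolyDeg k v) {m : ℕ} (hkm : k ≤ m) : IsPolyDeg m v := by
  obtain ⟨c, hc⟩ := hv
  refine ⟨fun i => if i ≤ k then c i else 0, fun t => ?_⟩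
  rw [hc, ← Finset.sum_subset (Finset.range_subset_range.2 (Nat.succ_le_succ hkm))]
  · refine Finset.sum_congr rfl fun i hi => ?_
    simp [Nat.lt_succ_iff.mp (Finset.mem_range.mp hi)]
  · intro i _ hi
    have hik : ¬i ≤ k := by simpa [Nat.lt_succ_iff] using hi
    simp [hik]

theorem add (hv : IsPolyDeg k v) (hw : IsPolyDeg k w) : IsPolyDeg k (fun t => v t + w t) := by
  obtain ⟨c, hc⟩ := hv
  obtain ⟨d, hd⟩ := hw
  exact ⟨c + d, fun t => by simp [hc, hd, smul_add, Finset.sum_add_distrib]⟩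

theorem sub_s6 (hv : IsPolyDeg k v) (hw : IsPolyDeg k w) : IsPolyDeg k (fun t => v t - w t) := by
  obtain ⟨c, hc⟩ := hv
  obtain ⟨d, hd⟩ := hw
  exact ⟨c - d, fun t => by simp [hc, hd, smul_sub, Finset.sum_sub_distrib]⟩

theorem const_smul (hv : IsPolyDeg k v) (r : ℝ) : IsPolyDeg k (fun t => r • v t) := by
  obtain ⟨c, hc⟩ := hv
  exact ⟨r • c, fun t => by simp [hc, Finset.smul_sum, smul_comm r]⟩

theorem id_smul (hv : IsPolyDeg k v) : IsPolyDeg (k + 1) (fun t => t • v t) := by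
  obtain ⟨c, hc⟩ := hv
  refine ⟨fun i => if i = 0 then 0 else c (i - 1), fun t => ?_⟩
  dsimp only
  rw [Finset.sum_range_succ', hc, Finset.smul_sum]
  simp only [Nat.succ_ne_zero, if_false, if_true, Nat.add_sub_cancel, smul_zero, add_zero,
    pow_succ, mul_smul]
  exact Finset.sum_congr rfl fun i _ => smul_comm _ _ _

theorem affine_smul (hv : IsPolyDeg k v) (α β : ℝ) :
    IsPolyDeg (k + 1) (fun t => (α + β * t) • v t) := by
  simpa only [add_smul, mul_smul] using
    ((hv.const_smul α).mono_s6 k.le_succ).add (hv.id_smul.const_smul β)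

theorem exists_inner_eq_eval_s6 (hv : IsPolyDeg k v) (h : H) :
    ∃ p : ℝ[X], p.natDegree ≤ k ∧ ∀ t, ⟪v t, h⟫ = p.eval t := by
  obtain ⟨c, hc⟩ := hv
  refine ⟨∑ i ∈ Finset.range (k + 1), C ⟪c i, h⟫ * X ^ i,
    natDegree_sum_le_of_forall_le _ _ fun i hi => (natDegree_C_mul_X_pow_le _ _).trans
      (Nat.lt_succ_iff.mp (Finset.mem_range.mp hi)), fun t => ?_⟩
  rw [hc, sum_inner, eval_finsetSum]
  refine Finset.sum_congr rfl fun i _ => ?_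
  rw [real_inner_smul_left, eval_C_mul, eval_X_pow, mul_comm]

end IsPolyDeg

theorem isPolyDeg_eval_smul {k : ℕ} {p : ℝ[X]} (hp : p.natDegree ≤ k) (h : H) :
    IsPolyDeg k (fun t => p.eval t • h) :=
  ⟨fun i => p.coeff i • h, fun t => by
    simp [eval_eq_sum_range' (Nat.lt_succ_of_le hp), Finset.sum_smul, smul_smul, mul_comm]⟩

theorem IsPolyDeg.exists_eq_intervalLegendre_smul {q : ℕ} {a b : ℝ} (hab : a < b) {e : ℝ → H}
    (he : IsPolyDeg q e)
    (horth : ∀ r : ℝ → H, IsPolyDeg (q - 1) r → ∫ t in Set.Ioo a b, ⟪e t, r t⟫ = 0) :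
    ∃ c : H, ∀ t, e t = (intervalLegendre q a b).eval t • c := by
  set L := intervalLegendre q a b
  have hLa : L.eval a ≠ 0 := by
    rw [intervalLegendre_eval_left]
    exact mul_ne_zero (by positivity) (pow_ne_zero _ (sub_ne_zero.mpr hab.ne))
  have hcoord : ∀ h : H, ∃ s : ℝ, ∀ t, ⟪e t, h⟫ = s * L.eval t := by
    intro h
    obtain ⟨p, hpq, hp⟩ := he.exists_inner_eq_eval_s6 h
    obtain ⟨s, rfl⟩ := exists_eq_C_mul_intervalLegendre hab hpq fun v hv => by
      have := horth _ (isPolyDeg_eval_smul (by omega : v.natDegree ≤ q - 1) h)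
      simpa [← integral_Ioc_eq_integral_Ioo, ← intervalIntegral.integral_of_le hab.le,
        real_inner_smul_right, hp, mul_comm] using this
    exact ⟨s, fun t => by rw [hp, eval_mul, eval_C]⟩
  refine ⟨(L.eval a)⁻¹ • e a, fun t => ?_⟩
  obtain ⟨s, hs⟩ := hcoord (e t - L.eval t • (L.eval a)⁻¹ • e a)
  rw [← sub_eq_zero, ← inner_self_eq_zero (𝕜 := ℝ)]
  rw [inner_sub_left, real_inner_smul_left, real_inner_smul_left, hs, hs]
  field_simp
  ring

theorem IsPolyDeg.mul_integral_norm_sq_eq_of_orthogonal {q : ℕ} {a b : ℝ} (hab : a < b)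
    {e : ℝ → H} (he : IsPolyDeg q e)
    (horth : ∀ r : ℝ → H, IsPolyDeg (q - 1) r → ∫ t in Set.Ioo a b, ⟪e t, r t⟫ = 0) :
    (2 * q + 1) * ∫ t in Set.Ioo a b, ‖e t‖ ^ 2 = (b - a) * ‖e a‖ ^ 2 := by
  obtain ⟨c, hc⟩ := he.exists_eq_intervalLegendre_smul hab horth
  have hnorm : ∀ t, ‖e t‖ ^ 2 = (intervalLegendre q a b).eval t ^ 2 * ‖c‖ ^ 2 := fun t => by
    rw [hc, norm_smul, mul_pow, Real.norm_eq_abs, sq_abs]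
  simp only [hnorm]
  rw [integral_mul_const, ← integral_Ioc_eq_integral_Ioo, ← intervalIntegral.integral_of_le hab.le,
    ← mul_assoc, integral_intervalLegendre_sq]
  ring

theorem integral_norm_sq_le_of_integral_inner_sub_eq_zero {a b K : ℝ} {e u w : ℝ → H}
    (he : Continuous e) (hu : Continuous u) (hw : Continuous w)
    (horth : ∫ t in Set.Ioo a b, ⟪e t, e t - u t⟫ = 0)
    (huw : ∀ t ∈ Set.Ioo a b, ‖u t‖ ≤ K * ‖w t‖) :
    ∫ t in Set.Ioo a b, ‖e t‖ ^ 2 ≤ K ^ 2 * ∫ t in Set.Ioo a b, ‖w t‖ ^ 2 := by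
  have hint {f : ℝ → ℝ} (hf : Continuous f) : IntegrableOn f (Set.Ioo a b) :=
    hf.integrableOn_Icc.mono_set Set.Ioo_subset_Icc_self
  have heu : ∫ t in Set.Ioo a b, ‖e t‖ ^ 2 = ∫ t in Set.Ioo a b, ⟪e t, u t⟫ := by
    have hsplit : ∀ t, ‖e t‖ ^ 2 = ⟪e t, u t⟫ + ⟪e t, e t - u t⟫ := fun t => by
      rw [← inner_add_right, add_sub_cancel, real_inner_self_eq_norm_sq]
    simp only [hsplit]
    rw [integral_add (hint (by fun_prop)) (hint (by fun_prop)), horth, add_zero]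
  -- Young's inequality; its `‖e‖² / 2` is then absorbed by the left-hand side.
  have hyoung : ∀ t ∈ Set.Ioo a b, ⟪e t, u t⟫ ≤ ‖e t‖ ^ 2 / 2 + K ^ 2 * ‖w t‖ ^ 2 / 2 := by
    intro t ht
    have := mul_le_mul_of_nonneg_left (huw t ht) (norm_nonneg (e t))
    nlinarith [real_inner_le_norm (e t) (u t), sq_nonneg (‖e t‖ - K * ‖w t‖)]
  have hmono :=
    setIntegral_mono_on (hint (by fun_prop)) (hint (by fun_prop)) measurableSet_Ioo hyoung
  rw [integral_add (hint (by fun_prop)) (hint (by fun_prop)), integral_div, integral_div,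
    integral_const_mul, ← heu] at hmono
  linarith

theorem IsL2ProjOn.integral_norm_sq_sub_le {k : ℕ} {a b θ lam : ℝ} {w g : ℝ → H}
    (hw : IsPolyDeg k w) (hg : IsL2ProjOn a b k (fun t => (θ - lam * (t - a)) • w t) g) :
    ∫ t in Set.Ioo a b, ‖(θ - lam * (t - a)) • w t - g t‖ ^ 2 ≤
      (lam * (b - a)) ^ 2 * ∫ t in Set.Ioo a b, ‖w t‖ ^ 2 := by
  have hwc := hw.continuous_s6
  have hgc := hg.1.continuous_s6
  have hrest : ∀ t, (θ - lam * (t - a)) • w t - g t - (-(lam * (t - a))) • w t = θ • w t - g t :=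
    fun t => by module
  have hbound : ∀ t ∈ Set.Ioo a b, ‖(-(lam * (t - a))) • w t‖ ≤ |lam| * (b - a) * ‖w t‖ := by
    intro t ht
    rw [norm_smul, Real.norm_eq_abs, abs_neg, abs_mul, abs_of_pos (sub_pos.mpr ht.1)]
    gcongr
    exact ht.2.le
  have := integral_norm_sq_le_of_integral_inner_sub_eq_zero
    (e := fun t => (θ - lam * (t - a)) • w t - g t) (by fun_prop) (by fun_prop) hwc
    (by simpa only [hrest] using hg.2 _ ((hw.const_smul θ).sub_s6 hg.1)) hbound
  rwa [mul_pow, sq_abs, ← mul_pow] at this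

end

/-- Pointwise bound at `t = a` for the projection error of `φ·w`, where
`φ(t) = θ − λ(t − a)` with `λ = ζ_q/τ`, `ζ_q = 1/(4(2q+1))`, `τ = b − a`, and `w` an
`H`-valued polynomial of degree at most `q − 1`. -/
theorem weighted_projection_left_value_bound {H : Type*} [NormedAddCommGroup H]
    [InnerProductSpace ℝ H]
    (q : ℕ) (hq : 1 ≤ q) (a b : ℝ) (hab : a < b)
    (τ ζq lam θ : ℝ) (hτ : τ = b - a)
    (hζ : ζq = 1 / (4 * (2 * (q : ℝ) + 1))) (hlam : lam = ζq / τ)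
    (φ : ℝ → ℝ) (hφ : ∀ t : ℝ, φ t = θ - lam * (t - a))
    (w g : ℝ → H) (hw : IsPolyDeg (q - 1) w)
    (hg : IsL2ProjOn a b (q - 1) (fun t => φ t • w t) g) :
    ‖φ a • w a - g a‖ ≤
      (1 / (4 * Real.sqrt (2 * (q : ℝ) + 1) * Real.sqrt τ)) *
        Real.sqrt (∫ t in Set.Ioo a b, ‖w t‖ ^ 2) := by
  obtain rfl : φ = fun t => θ - lam * (t - a) := funext hφ
  have hτ0 : 0 < τ := by linarith
  set e := fun t => (θ - lam * (t - a)) • w t - g t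
  have he : IsPolyDeg q e := by
    refine .sub ?_ (hg.1.mono_s6 (Nat.sub_le q 1))
    convert Nat.sub_add_cancel hq ▸ hw.affine_smul (θ + lam * a) (-lam) using 3 with t
    ring
  have hpeak := he.mul_integral_norm_sq_eq_of_orthogonal hab hg.2
  have henergy := hg.integral_norm_sq_sub_le hw
  rw [← hτ, show lam * τ = ζq by rw [hlam, div_mul_cancel₀ _ hτ0.ne']] at henergy
  have hIw : 0 ≤ ∫ t in Set.Ioo a b, ‖w t‖ ^ 2 := integral_nonneg fun t => sq_nonneg _
  rw [← sq_le_sq₀ (norm_nonneg _) (by positivity)]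
  calc ‖e a‖ ^ 2 = (2 * q + 1) / τ * ∫ t in Set.Ioo a b, ‖e t‖ ^ 2 := by
        rw [← hτ] at hpeak
        field_simp
        linarith
    _ ≤ (2 * q + 1) / τ * (ζq ^ 2 * ∫ t in Set.Ioo a b, ‖w t‖ ^ 2) := by gcongr
    _ = _ := by
        rw [mul_pow, div_pow, mul_pow, mul_pow, Real.sq_sqrt (by positivity), Real.sq_sqrt hτ0.le,
          Real.sq_sqrt hIw, hζ]
        field_simp
end

section
/- For every integer q ≥ 0, all real numbers a < b, and every real polynomial p of degree at most q, sup_{t ∈ [a, b]} |p(t)| ≤ (q + 1)·(b − a)^{−1/2}·(∫_a^b p(t)² dt)^{1/2}. -/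
/-!
On `[0, 1]` the polynomial `K = -(P_q + P_{q+1})' / 2`, built from the shifted Legendre
polynomials `P_n` (normalised by `P_n(0) = 1`), reproduces evaluation at `0` on polynomials of
degree at most `q`: integrating by parts, `∫ K p = p(0)` because `P_q + P_{q+1}` vanishes at `1`,
equals `2` at `0`, and is orthogonal to `p'`. Since moreover `K(0) = (q + 1)²`, Cauchy–Schwarz
gives `p(0)² ≤ (q + 1)² ∫₀¹ p²`. An affine change of variables turns this into
`p(u)² ≤ (q + 1)² ⨍_{u..v} p²` for any interval with endpoint `u`; applying it to `[a, t]` and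
`[t, b]` and adding yields `(b - a) p(t)² ≤ (q + 1)² ∫_a^b p²`.
-/

open MeasureTheory Polynomial

theorem sq_intervalIntegral_mul_le {f g : ℝ → ℝ} (hf : Continuous f) (hg : Continuous g)
    {a b : ℝ} (hab : a ≤ b) :
    (∫ x in a..b, f x * g x) ^ 2 ≤ (∫ x in a..b, f x ^ 2) * ∫ x in a..b, g x ^ 2 := by
  have hquad : ∀ t : ℝ, 0 ≤ (∫ x in a..b, f x ^ 2) * (t * t)
      + 2 * (∫ x in a..b, f x * g x) * t + ∫ x in a..b, g x ^ 2 := by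
    intro t
    have hexpand : (fun x => (t * f x + g x) ^ 2)
        = fun x => t * t * f x ^ 2 + 2 * t * (f x * g x) + g x ^ 2 := by
      funext x; ring
    have hnonneg : 0 ≤ ∫ x in a..b, (t * f x + g x) ^ 2 :=
      intervalIntegral.integral_nonneg hab fun x _ => sq_nonneg _
    rw [hexpand, intervalIntegral.integral_add, intervalIntegral.integral_add,
      intervalIntegral.integral_const_mul, intervalIntegral.integral_const_mul] at hnonneg
    · linarith
    all_goals exact Continuous.intervalIntegrable (by fun_prop) a b
  have hdiscrim := discrim_le_zero hquad
  rw [discrim] at hdiscrim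
  nlinarith

namespace Polynomial

theorem integral_derivative_mul_eval (P Q : ℝ[X]) (a b : ℝ) :
    ∫ x in a..b, (derivative P).eval x * Q.eval x
      = P.eval b * Q.eval b - P.eval a * Q.eval a
        - ∫ x in a..b, P.eval x * (derivative Q).eval x := by
  have := intervalIntegral.integral_mul_deriv_eq_deriv_mul (fun x _ => P.hasDerivAt x)
    (fun x _ => Q.hasDerivAt x) (P.derivative.continuous.intervalIntegrable a b)
    (Q.derivative.continuous.intervalIntegrable a b)
  linarith

theorem integral_iterate_derivative_mul_eval {f : ℝ[X]} {a b : ℝ} {n : ℕ}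
    (hf : ∀ j < n, (derivative^[j] f).IsRoot a ∧ (derivative^[j] f).IsRoot b) (g : ℝ[X]) :
    ∫ x in a..b, (derivative^[n] f).eval x * g.eval x
      = (-1) ^ n * ∫ x in a..b, f.eval x * (derivative^[n] g).eval x := by
  induction n generalizing f with
  | zero => simp
  | succ n ih =>
    have hf' : ∀ j < n, (derivative^[j] (derivative f)).IsRoot a ∧
        (derivative^[j] (derivative f)).IsRoot b := fun j hj => hf (j + 1) (by omega)
    obtain ⟨ha, hb⟩ := hf 0 n.succ_pos
    rw [Function.iterate_succ_apply, ih hf', integral_derivative_mul_eval,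
      ← Function.iterate_succ_apply' derivative]
    simp only [Function.iterate_zero_apply, IsRoot.def] at ha hb
    rw [ha, hb]
    ring

theorem isRoot_iterate_derivative_of_pow_dvd {R : Type*} [CommRing R] {p : R[X]}
    {t : R} {n j : ℕ} (h : (X - C t) ^ n ∣ p) (hj : j < n) : (derivative^[j] p).IsRoot t :=
  dvd_iff_isRoot.mp <| (dvd_pow_self _ (Nat.sub_ne_zero_of_lt hj)).trans
    (pow_sub_dvd_iterate_derivative_of_pow_dvd j h)

noncomputable def realShiftedLegendre (n : ℕ) : ℝ[X] :=
  (shiftedLegendre n).map (algebraMap ℤ ℝ)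

theorem factorial_mul_realShiftedLegendre (n : ℕ) :
    (n.factorial : ℝ[X]) * realShiftedLegendre n = derivative^[n] (X ^ n * (1 - X) ^ n) := by
  have := congrArg (map (algebraMap ℤ ℝ)) (factorial_mul_shiftedLegendre_eq n)
  simpa [realShiftedLegendre, ← iterate_derivative_map] using this

@[simp]
theorem natDegree_realShiftedLegendre (n : ℕ) : (realShiftedLegendre n).natDegree = n := by
  rw [realShiftedLegendre, natDegree_map_eq_of_injective (RingHom.injective_int _),
    natDegree_shiftedLegendre]

theorem realShiftedLegendre_eval_zero (n : ℕ) : (realShiftedLegendre n).eval 0 = 1 := by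
  rw [← coeff_zero_eq_eval_zero, realShiftedLegendre, coeff_map, coeff_shiftedLegendre]
  simp

theorem realShiftedLegendre_eval_one (n : ℕ) : (realShiftedLegendre n).eval 1 = (-1) ^ n := by
  rw [realShiftedLegendre, eval_map_algebraMap, shiftedLegendre_eval_symm, sub_self,
    ← eval_map_algebraMap, ← realShiftedLegendre, realShiftedLegendre_eval_zero, mul_one]

theorem derivative_realShiftedLegendre_eval_zero (n : ℕ) :
    (derivative (realShiftedLegendre n)).eval 0 = -(n * (n + 1)) := by
  rw [← coeff_zero_eq_eval_zero, coeff_derivative, realShiftedLegendre, coeff_map,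
    coeff_shiftedLegendre, Nat.choose_succ_self_right]
  simp

theorem integral_realShiftedLegendre_mul_eq_zero {n : ℕ} {g : ℝ[X]}
    (hg : derivative^[n] g = 0) :
    ∫ x in (0 : ℝ)..1, (realShiftedLegendre n).eval x * g.eval x = 0 := by
  have hroots : ∀ j < n, (derivative^[j] (X ^ n * (1 - X) ^ n : ℝ[X])).IsRoot 0 ∧
      (derivative^[j] (X ^ n * (1 - X) ^ n : ℝ[X])).IsRoot 1 := by
    refine fun j hj => ⟨isRoot_iterate_derivative_of_pow_dvd ?_ hj,
      isRoot_iterate_derivative_of_pow_dvd ?_ hj⟩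
    · simp
    · exact Dvd.dvd.mul_left (pow_dvd_pow_of_dvd ⟨-1, by simp⟩ n) _
  have hfac : (n.factorial : ℝ) ≠ 0 := by positivity
  have := integral_iterate_derivative_mul_eval hroots g
  rw [← factorial_mul_realShiftedLegendre, hg] at this
  simpa [mul_assoc, hfac] using this

/-- This is the Christoffel–Darboux kernel `∑_{k ≤ q} (2k + 1) P_k(0) P_k` in closed form. -/
noncomputable def legendreKernel (q : ℕ) : ℝ[X] :=
  C (-2⁻¹) * derivative (realShiftedLegendre q + realShiftedLegendre (q + 1))

theorem natDegree_legendreKernel_le (q : ℕ) : (legendreKernel q).natDegree ≤ q :=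
  (natDegree_C_mul_le _ _).trans <| (natDegree_derivative_le _).trans <|
    Nat.sub_le_sub_right (natDegree_add_le_of_degree_le (n := q + 1) (by simp) (by simp)) 1

theorem legendreKernel_eval_zero (q : ℕ) : (legendreKernel q).eval 0 = ((q : ℝ) + 1) ^ 2 := by
  simp only [legendreKernel, eval_mul, eval_C, derivative_add, eval_add,
    derivative_realShiftedLegendre_eval_zero]
  push_cast
  ring

theorem integral_legendreKernel_mul_eval {q : ℕ} {P : ℝ[X]} (hP : P.natDegree ≤ q) :
    ∫ x in (0 : ℝ)..1, (legendreKernel q).eval x * P.eval x = P.eval 0 := by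
  have horth : ∀ n ≥ q, ∫ x in (0 : ℝ)..1,
      (realShiftedLegendre n).eval x * (derivative P).eval x = 0 := fun n hn =>
    integral_realShiftedLegendre_mul_eq_zero <| by
      rw [← Function.iterate_succ_apply]; exact iterate_derivative_eq_zero (by omega)
  have hsum : ∫ x in (0 : ℝ)..1, (realShiftedLegendre q + realShiftedLegendre (q + 1)).eval x
      * (derivative P).eval x = 0 := by
    simp only [eval_add, add_mul]
    rw [intervalIntegral.integral_add, horth q le_rfl, horth (q + 1) q.le_succ, add_zero]
    all_goals exact Continuous.intervalIntegrable (by fun_prop) 0 1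
  simp only [legendreKernel, eval_mul, eval_C, mul_assoc]
  rw [intervalIntegral.integral_const_mul, integral_derivative_mul_eval, hsum]
  simp only [eval_add, realShiftedLegendre_eval_zero, realShiftedLegendre_eval_one, pow_succ]
  ring

variable {q : ℕ} {p : ℝ[X]}

theorem sq_eval_zero_le (hp : p.natDegree ≤ q) :
    p.eval 0 ^ 2 ≤ ((q : ℝ) + 1) ^ 2 * ∫ x in (0 : ℝ)..1, p.eval x ^ 2 := by
  have hKK : ∫ x in (0 : ℝ)..1, (legendreKernel q).eval x ^ 2 = ((q : ℝ) + 1) ^ 2 := by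
    simp_rw [sq, integral_legendreKernel_mul_eval (natDegree_legendreKernel_le q),
      legendreKernel_eval_zero, sq]
  have := sq_intervalIntegral_mul_le (legendreKernel q).continuous p.continuous zero_le_one
  rwa [integral_legendreKernel_mul_eval hp, hKK] at this

theorem sq_eval_le_intervalAverage (hp : p.natDegree ≤ q) {u v : ℝ} (huv : u ≠ v) :
    p.eval u ^ 2 ≤ ((q : ℝ) + 1) ^ 2 * ⨍ x in u..v, p.eval x ^ 2 := by
  have hvu : v - u ≠ 0 := sub_ne_zero.mpr huv.symm
  set P := p.comp (C (v - u) * X + C u)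
  have hP : ∀ x, P.eval x = p.eval ((v - u) * x + u) := fun x => by simp [P]
  have hPdeg : P.natDegree ≤ q := by
    rwa [natDegree_comp, natDegree_linear hvu, mul_one]
  have := sq_eval_zero_le hPdeg
  simp_rw [hP, intervalIntegral.integral_comp_mul_add (fun x => p.eval x ^ 2) hvu] at this
  rwa [mul_zero, zero_add, mul_one, sub_add_cancel, ← interval_average_eq] at this

theorem sub_mul_sq_eval_le (hp : p.natDegree ≤ q) {u v w : ℝ} (huv : u ≤ v)
    (hw : w = u ∨ w = v) :
    (v - u) * p.eval w ^ 2 ≤ ((q : ℝ) + 1) ^ 2 * ∫ x in u..v, p.eval x ^ 2 := by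
  rcases huv.eq_or_lt with rfl | huv
  · simp
  have havg : p.eval w ^ 2 ≤ ((q : ℝ) + 1) ^ 2 * ((v - u)⁻¹ * ∫ x in u..v, p.eval x ^ 2) := by
    rw [← smul_eq_mul (v - u)⁻¹, ← interval_average_eq]
    rcases hw with rfl | rfl
    · exact sq_eval_le_intervalAverage hp huv.ne
    · rw [interval_average_symm]
      exact sq_eval_le_intervalAverage hp huv.ne'
  have hvu : 0 < v - u := sub_pos.mpr huv
  calc (v - u) * p.eval w ^ 2
      ≤ (v - u) * (((q : ℝ) + 1) ^ 2 * ((v - u)⁻¹ * ∫ x in u..v, p.eval x ^ 2)) := by gcongr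
    _ = ((q : ℝ) + 1) ^ 2 * ∫ x in u..v, p.eval x ^ 2 := by field_simp

end Polynomial

/-- For every polynomial `p` of degree at most `q`,
`sup_{t ∈ [a,b]} |p(t)| ≤ (q+1) (b−a)^{−1/2} (∫_a^b p(t)² dt)^{1/2}`. -/
theorem polynomial_sup_le_L2 (q : ℕ) (a b : ℝ) (hab : a < b)
    (p : Polynomial ℝ) (hdeg : p.natDegree ≤ q) :
    ∀ t ∈ Set.Icc a b, |p.eval t| ≤
      ((q : ℝ) + 1) * (Real.sqrt (b - a))⁻¹ *
        Real.sqrt (∫ s in Set.Ioo a b, (p.eval s) ^ 2) := by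
  rintro t ⟨hat, htb⟩
  rw [← integral_Ioc_eq_integral_Ioo, ← intervalIntegral.integral_of_le hab.le]
  set I := ∫ x in a..b, p.eval x ^ 2
  have hsplit : (b - a) * p.eval t ^ 2 ≤ ((q : ℝ) + 1) ^ 2 * I := by
    have hleft := sub_mul_sq_eval_le hdeg hat (Or.inr rfl)
    have hright := sub_mul_sq_eval_le hdeg htb (Or.inl rfl)
    have hint : Continuous fun x => p.eval x ^ 2 := by fun_prop
    have hadd : (∫ x in a..t, p.eval x ^ 2) + (∫ x in t..b, p.eval x ^ 2) = I :=
      intervalIntegral.integral_add_adjacent_intervals (hint.intervalIntegrable a t)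
        (hint.intervalIntegrable t b)
    rw [← hadd]
    linarith
  have hba : 0 < b - a := sub_pos.mpr hab
  have hI : 0 ≤ I := intervalIntegral.integral_nonneg hab.le fun x _ => sq_nonneg _
  calc |p.eval t| ≤ Real.sqrt (((q : ℝ) + 1) ^ 2 * I / (b - a)) :=
        Real.abs_le_sqrt <| by rw [le_div_iff₀ hba]; linarith
    _ = ((q : ℝ) + 1) * (Real.sqrt (b - a))⁻¹ * Real.sqrt I := by
        rw [Real.sqrt_div' _ hba.le, Real.sqrt_mul' _ hI, Real.sqrt_sq (by positivity)]
        ring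
end

section
/- For every integer q ≥ 0 and every exponent r ∈ [1, ∞], there exists a constant C > 0, depending only on q and r, such that for all real numbers a < b and every real polynomial p of degree at most q, the L^r(a, b) norm of the derivative p' satisfies ‖p'‖_{L^r(a,b)} ≤ C·(b − a)^{−1}·‖p‖_{L^r(a,b)}. -/
open MeasureTheory
open scoped ENNReal

/-!
On polynomials of degree `≤ q` the `L¹(0, 1)` norm is a norm, so by finite dimensionality it
dominates the size of the coefficients, and hence `sup_{[0,1]} |p'|`. The affine change of
variables `[0, 1] → [a, b]` turns this into `sup_{[a,b]} |p'| ≤ C (b - a)⁻² ‖p‖_{L¹(a,b)}`, and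
Hölder's inequality on an interval of length `b - a`, in the forms
`‖p'‖_r ≤ (b - a)^{1/r} ‖p'‖_∞` and `‖p‖_1 ≤ (b - a)^{1 - 1/r} ‖p‖_r`, gives the claim.
-/

open Polynomial Set

theorem exists_pos_mul_norm_le_of_continuous {E : Type*} [NormedAddCommGroup E]
    [NormedSpace ℝ E] [FiniteDimensional ℝ E] {f : E → ℝ} (hf : Continuous f)
    (hsmul : ∀ c : ℝ, 0 < c → ∀ v, f (c • v) = c * f v) (hpos : ∀ v ≠ 0, 0 < f v) :
    ∃ c, 0 < c ∧ ∀ v, c * ‖v‖ ≤ f v := by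
  have hf0 : f 0 = 0 := by
    have h := hsmul 2 two_pos 0
    rw [smul_zero] at h
    linarith
  rcases subsingleton_or_nontrivial E with hE | hE
  · exact ⟨1, one_pos, fun v => by simp [Subsingleton.elim v 0, hf0]⟩
  obtain ⟨v₀, hv₀, hmin⟩ := (isCompact_sphere (0 : E) 1).exists_isMinOn
    (NormedSpace.sphere_nonempty.2 zero_le_one) hf.continuousOn
  refine ⟨f v₀, hpos v₀ (ne_zero_of_mem_unit_sphere ⟨v₀, hv₀⟩), fun v => ?_⟩
  rcases eq_or_ne v 0 with rfl | hv
  · simp [hf0]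
  have hnorm : 0 < ‖v‖ := norm_pos_iff.2 hv
  calc f v₀ * ‖v‖ ≤ f (‖v‖⁻¹ • v) * ‖v‖ := by
        gcongr
        exact hmin (by simp [norm_smul, hnorm.ne'])
    _ = f v := by rw [hsmul _ (inv_pos.2 hnorm)]; field_simp

theorem integral_abs_eval_pos {p : ℝ[X]} (hp : p ≠ 0) {a b : ℝ} (hab : a < b) :
    0 < ∫ t in a..b, |p.eval t| := by
  obtain ⟨c, hc, hroot⟩ := (Icc_infinite hab).exists_notMem_finite (p.finite_setOfPred_isRoot hp)
  exact intervalIntegral.integral_pos hab p.continuous.abs.continuousOn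
    (fun _ _ => abs_nonneg _) ⟨c, hc, abs_pos.2 hroot⟩

theorem exists_pos_mul_norm_degreeLTEquiv_le_integral (n : ℕ) {a b : ℝ} (hab : a < b) :
    ∃ c, 0 < c ∧ ∀ p (hp : p ∈ degreeLT ℝ n),
      c * ‖degreeLTEquiv ℝ n ⟨p, hp⟩‖ ≤ ∫ t in a..b, |p.eval t| := by
  set e := degreeLTEquiv ℝ n
  have heval : ∀ v t, (e.symm v : ℝ[X]).eval t = ∑ i, v i * t ^ (i : ℕ) := fun v t => by
    rw [eval_eq_sum_degreeLTEquiv (e.symm v).2]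
    simp [e]
  obtain ⟨c, hc, hle⟩ := exists_pos_mul_norm_le_of_continuous
    (f := fun v => ∫ t in a..b, |(e.symm v : ℝ[X]).eval t|)
    (intervalIntegral.continuous_parametric_intervalIntegral_of_continuous'
      (by simp only [heval]; fun_prop) a b)
    (fun c hc v => by
      simp only [map_smul, Submodule.coe_smul, eval_smul, smul_eq_mul, abs_mul, abs_of_pos hc,
        intervalIntegral.integral_const_mul])
    (fun v hv => integral_abs_eval_pos (by simpa using hv) hab)
  exact ⟨c, hc, fun p hp => by simpa using hle (e ⟨p, hp⟩)⟩

theorem abs_eval_derivative_le {n : ℕ} {p : ℝ[X]} (hp : p ∈ degreeLT ℝ n) {s : ℝ}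
    (hs : |s| ≤ 1) : |p.derivative.eval s| ≤ n ^ 2 * ‖degreeLTEquiv ℝ n ⟨p, hp⟩‖ := by
  set v := degreeLTEquiv ℝ n ⟨p, hp⟩
  have hterm : ∀ i : Fin n, |v i * i * s ^ ((i : ℕ) - 1)| ≤ n * ‖v‖ := fun i => by
    rw [abs_mul, abs_mul, abs_pow, Nat.abs_cast, mul_comm (n : ℝ)]
    have hv : |v i| ≤ ‖v‖ := by simpa using norm_le_pi_norm v i
    have hi : (i : ℝ) ≤ n := by exact_mod_cast i.2.le
    have hs' : |s| ^ ((i : ℕ) - 1) ≤ 1 := pow_le_one₀ (abs_nonneg s) hs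
    calc |v i| * i * |s| ^ ((i : ℕ) - 1) ≤ ‖v‖ * n * 1 := by gcongr
      _ = ‖v‖ * n := mul_one _
  have hsum : p.derivative.eval s = ∑ i : Fin n, v i * i * s ^ ((i : ℕ) - 1) := by
    rw [derivative_eval, ← sum_fin _ (fun _ => by simp) (mem_degreeLT.1 hp)]
    rfl
  calc |p.derivative.eval s| ≤ ∑ i : Fin n, |v i * i * s ^ ((i : ℕ) - 1)| := by
        rw [hsum]; exact Finset.abs_sum_le_sum_abs _ _
    _ ≤ ∑ _i : Fin n, n * ‖v‖ := Finset.sum_le_sum fun i _ => hterm i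
    _ = n ^ 2 * ‖v‖ := by
        rw [Finset.sum_const, Finset.card_univ, Fintype.card_fin, nsmul_eq_mul]
        ring

theorem exists_abs_eval_derivative_le_integral_unitInterval (q : ℕ) :
    ∃ C, 0 < C ∧ ∀ p : ℝ[X], p.natDegree ≤ q → ∀ s ∈ Icc (0 : ℝ) 1,
      |p.derivative.eval s| ≤ C * ∫ u in (0 : ℝ)..1, |p.eval u| := by
  obtain ⟨c, hc, hle⟩ := exists_pos_mul_norm_degreeLTEquiv_le_integral (q + 1) zero_lt_one
  refine ⟨(q + 1) ^ 2 / c, by positivity, fun p hp s hs => ?_⟩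
  have hmem : p ∈ degreeLT ℝ (q + 1) :=
    mem_degreeLT.2 (degree_le_natDegree.trans_lt (by exact_mod_cast Nat.lt_succ_of_le hp))
  have hs' : |s| ≤ 1 := abs_le.2 ⟨by linarith [hs.1], hs.2⟩
  calc |p.derivative.eval s| ≤ (q + 1) ^ 2 * ‖degreeLTEquiv ℝ (q + 1) ⟨p, hmem⟩‖ := by
        exact_mod_cast abs_eval_derivative_le hmem hs'
    _ ≤ (q + 1) ^ 2 * ((∫ u in (0 : ℝ)..1, |p.eval u|) / c) := by
        gcongr
        rw [le_div_iff₀ hc, mul_comm]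
        exact hle p hmem
    _ = (q + 1) ^ 2 / c * ∫ u in (0 : ℝ)..1, |p.eval u| := by ring

theorem exists_abs_eval_derivative_le_integral (q : ℕ) :
    ∃ C, 0 < C ∧ ∀ a b : ℝ, a < b → ∀ p : ℝ[X], p.natDegree ≤ q → ∀ t ∈ Icc a b,
      |p.derivative.eval t| ≤ C / (b - a) ^ 2 * ∫ u in a..b, |p.eval u| := by
  obtain ⟨C, hC, hunit⟩ := exists_abs_eval_derivative_le_integral_unitInterval q
  refine ⟨C, hC, fun a b hab p hp t ht => ?_⟩
  set L := b - a
  have hL : 0 < L := sub_pos.2 hab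
  set P := p.comp (Polynomial.C L * X + Polynomial.C a)
  have hPdeg : P.natDegree ≤ q := natDegree_comp_le.trans <| by
    simpa using Nat.mul_le_mul hp (natDegree_linear_le (a := L) (b := a))
  have hPeval : ∀ u, P.eval u = p.eval (L * u + a) := fun u => by simp [P]
  have hPderiv : ∀ u, P.derivative.eval u = L * p.derivative.eval (L * u + a) := fun u => by
    simp [P, derivative_comp]
  have hPint : ∫ u in (0 : ℝ)..1, |P.eval u| = L⁻¹ * ∫ u in a..b, |p.eval u| := by
    simp only [hPeval]
    rw [intervalIntegral.integral_comp_mul_add (fun x => |p.eval x|) hL.ne', mul_zero,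
      zero_add, mul_one, smul_eq_mul, show L + a = b from sub_add_cancel b a]
  have hs : (t - a) / L ∈ Icc (0 : ℝ) 1 :=
    ⟨div_nonneg (by linarith [ht.1]) hL.le, (div_le_one hL).2 (by linarith [ht.2])⟩
  have key := hunit P hPdeg _ hs
  rw [hPderiv, hPint, mul_div_cancel₀ _ hL.ne', sub_add_cancel, abs_mul, abs_of_pos hL] at key
  calc |p.derivative.eval t| = L⁻¹ * (L * |p.derivative.eval t|) := by field_simp
    _ ≤ L⁻¹ * (C * (L⁻¹ * ∫ u in a..b, |p.eval u|)) := by gcongr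
    _ = C / L ^ 2 * ∫ u in a..b, |p.eval u| := by field_simp

theorem eLpNorm_le_mul_measure_univ_mul_eLpNorm {α E F : Type*} [MeasurableSpace α]
    [NormedAddCommGroup E] [NormedAddCommGroup F] {μ : Measure α} {f : α → E} {g : α → F}
    (hf : AEStronglyMeasurable f μ) (hg : AEStronglyMeasurable g μ) {r A : ℝ≥0∞} (hr : 1 ≤ r)
    (h : eLpNorm g ∞ μ ≤ A * eLpNorm f 1 μ) :
    eLpNorm g r μ ≤ A * μ univ * eLpNorm f r μ := by
  have hexp : 0 ≤ 1 - 1 / r.toReal := by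
    rcases eq_or_ne r ∞ with rfl | hr'
    · simp
    · exact sub_nonneg.2 ((div_le_one₀ (ENNReal.toReal_pos (by positivity) hr')).2 <|
        by simpa using ENNReal.toReal_mono hr' hr)
  calc eLpNorm g r μ ≤ eLpNorm g ∞ μ * μ univ ^ (1 / r.toReal) := by
        simpa using eLpNorm_le_eLpNorm_mul_rpow_measure_univ le_top hg
    _ ≤ A * (eLpNorm f r μ * μ univ ^ (1 - 1 / r.toReal)) * μ univ ^ (1 / r.toReal) := by
        gcongr
        exact h.trans (by gcongr; simpa using eLpNorm_le_eLpNorm_mul_rpow_measure_univ hr hf)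
    _ = A * μ univ * eLpNorm f r μ := by
        rw [mul_assoc, mul_assoc, ← ENNReal.rpow_add_of_nonneg _ _ hexp (by positivity),
          sub_add_cancel, ENNReal.rpow_one]
        ring

theorem eLpNorm_one_restrict_Ioo {f : ℝ → ℝ} (hf : Continuous f) {a b : ℝ} (hab : a ≤ b) :
    eLpNorm f 1 (volume.restrict (Ioo a b)) = ENNReal.ofReal (∫ t in a..b, |f t|) := by
  rw [eLpNorm_one_eq_lintegral_enorm, intervalIntegral.integral_of_le hab,
    integral_Ioc_eq_integral_Ioo, ← ofReal_integral_norm_eq_lintegral_enorm]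
  · rfl
  · exact hf.integrableOn_Icc.mono_set Ioo_subset_Icc_self

/-- Inverse estimate: for every `q ≥ 0` and `r ∈ [1, ∞]` there is a constant `C > 0`,
depending only on `q` and `r`, such that for all `a < b` and every real polynomial `p` of
degree at most `q`, `‖p'‖_{L^r(a,b)} ≤ C (b−a)⁻¹ ‖p‖_{L^r(a,b)}`. -/
theorem polynomial_inverse_estimate (q : ℕ) (r : ℝ≥0∞) (hr : 1 ≤ r) :
    ∃ C : ℝ, 0 < C ∧ ∀ a b : ℝ, a < b → ∀ p : Polynomial ℝ, p.natDegree ≤ q →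
      eLpNorm (fun t => (Polynomial.derivative p).eval t) r
          (volume.restrict (Set.Ioo a b)) ≤
        ENNReal.ofReal (C * (b - a)⁻¹) *
          eLpNorm (fun t => p.eval t) r (volume.restrict (Set.Ioo a b)) := by
  obtain ⟨C, hC, hbound⟩ := exists_abs_eval_derivative_le_integral q
  refine ⟨C, hC, fun a b hab p hp => ?_⟩
  have hsup : eLpNorm (fun t => p.derivative.eval t) ∞ (volume.restrict (Ioo a b)) ≤
      ENNReal.ofReal (C / (b - a) ^ 2) *
        eLpNorm (fun t => p.eval t) 1 (volume.restrict (Ioo a b)) := by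
    rw [eLpNorm_one_restrict_Ioo p.continuous hab.le, ← ENNReal.ofReal_mul (by positivity),
      eLpNorm_exponent_top]
    refine eLpNormEssSup_le_of_ae_bound ((ae_restrict_iff' measurableSet_Ioo).2 ?_)
    exact Filter.Eventually.of_forall fun t ht => hbound a b hab p hp t (Ioo_subset_Icc_self ht)
  calc _ ≤ ENNReal.ofReal (C / (b - a) ^ 2) * volume.restrict (Ioo a b) univ *
        eLpNorm (fun t => p.eval t) r (volume.restrict (Ioo a b)) :=
        eLpNorm_le_mul_measure_univ_mul_eLpNorm p.continuous.aestronglyMeasurable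
          p.derivative.continuous.aestronglyMeasurable hr hsup
    _ = _ := by
        rw [Measure.restrict_apply_univ, Real.volume_Ioo, ← ENNReal.ofReal_mul (by positivity)]
        congr 2
        field_simp
end

section
/- For all real numbers a < b and every continuously differentiable function f : [a, b] → ℝ, sup_{t ∈ [a, b]} |f(t)| ≤ (b − a)^{−1/2}·(∫_a^b f(t)² dt)^{1/2} + (b − a)^{1/2}·(∫_a^b f'(t)² dt)^{1/2}. -/
/-! By the fundamental theorem of calculus, `|f t| ≤ |f s| + ∫ |f'|` for all `s, t ∈ [a, b]`.
Averaging over `s ∈ (a, b)` gives `|f t| ≤ (b - a)⁻¹ ∫ |f| + ∫ |f'|`, and by Cauchy–Schwarz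
each of these `L¹` norms is at most `√(b - a)` times the corresponding `L²` norm. -/

open MeasureTheory Set Interval

theorem integral_abs_le_sqrt_measureReal_univ_mul_sqrt_integral_sq {α : Type*}
    [MeasurableSpace α] {μ : Measure α} [IsFiniteMeasure μ] {h : α → ℝ} (hh : MemLp h 2 μ) :
    ∫ x, |h x| ∂μ ≤ √(μ.real univ) * √(∫ x, h x ^ 2 ∂μ) := by
  have holder := integral_mul_norm_le_Lp_mul_Lq Real.HolderConjugate.two_two
    (f := h) (g := fun _ ↦ (1 : ℝ)) (by simpa using hh) (memLp_const 1)
  simp only [Real.norm_eq_abs, abs_one, mul_one, integral_const, smul_eq_mul, Real.rpow_two,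
    sq_abs, one_pow, ← Real.sqrt_eq_rpow] at holder
  rwa [mul_comm] at holder

theorem ContinuousOn.memLp_restrict_of_isCompact {X E : Type*} [TopologicalSpace X]
    [MeasurableSpace X] [OpensMeasurableSpace X] [T2Space X] [NormedAddCommGroup E]
    [SecondCountableTopologyEither X E] {μ : Measure X} [IsFiniteMeasureOnCompacts μ]
    {f : X → E} {s : Set X} (hs : IsCompact s) (hf : ContinuousOn f s) (p : ENNReal) :
    MemLp f p (μ.restrict s) := by
  have : IsFiniteMeasure (μ.restrict s) := isFiniteMeasure_restrict.2 hs.measure_lt_top.ne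
  obtain ⟨C, hC⟩ := hs.exists_bound_of_continuousOn hf
  exact .of_bound (hf.aestronglyMeasurable hs.measurableSet) C <|
    (ae_restrict_iff' hs.measurableSet).2 (ae_of_all _ hC)

theorem integral_Ioo_abs_le_sqrt_mul_sqrt_integral_sq {g : ℝ → ℝ} {a b : ℝ} (hab : a ≤ b)
    (hg : ContinuousOn g (Icc a b)) :
    ∫ s in Ioo a b, |g s| ≤ √(b - a) * √(∫ s in Ioo a b, g s ^ 2) := by
  have hg2 : MemLp g 2 (volume.restrict (Ioo a b)) :=
    (hg.memLp_restrict_of_isCompact isCompact_Icc 2).mono_measure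
      (Measure.restrict_mono Ioo_subset_Icc_self le_rfl)
  have := integral_abs_le_sqrt_measureReal_univ_mul_sqrt_integral_sq hg2
  rwa [measureReal_restrict_apply_univ, Real.volume_real_Ioo_of_le hab] at this

theorem abs_sub_le_integral_abs_deriv {f f' : ℝ → ℝ} {a b : ℝ}
    (hderiv : ∀ t ∈ Icc a b, HasDerivWithinAt f (f' t) (Icc a b) t)
    (hcont : ContinuousOn f' (Icc a b)) {u v : ℝ} (hu : u ∈ Icc a b) (hv : v ∈ Icc a b) :
    |f v - f u| ≤ ∫ x in Ioo a b, |f' x| := by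
  have huv : uIcc u v ⊆ Icc a b := uIcc_subset_Icc hu hv
  have hftc : ∫ x in u..v, f' x = f v - f u := by
    refine intervalIntegral.integral_eq_sub_of_hasDeriv_right
      (fun x hx ↦ (hderiv x (huv hx)).continuousWithinAt.mono huv) (fun x hx ↦ ?_)
      ((hcont.mono huv).intervalIntegrable)
    have hx : x ∈ Ioo a b :=
      Ioo_subset_Ioo (le_min hu.1 hv.1) (max_le hu.2 hv.2) hx
    exact ((hderiv x (Ioo_subset_Icc_self hx)).hasDerivAt
      (Icc_mem_nhds hx.1 hx.2)).hasDerivWithinAt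
  rw [← hftc, ← integral_Icc_eq_integral_Ioo]
  calc |∫ x in u..v, f' x| ≤ ∫ x in Ι u v, |f' x| :=
        intervalIntegral.norm_integral_le_integral_norm_uIoc (f := f')
    _ ≤ ∫ x in Icc a b, |f' x| :=
        setIntegral_mono_set (hcont.norm.integrableOn_compact isCompact_Icc)
          (ae_of_all _ fun _ ↦ abs_nonneg _) (uIoc_subset_uIcc.trans huv).eventuallyLE

theorem abs_le_integral_abs_div_add_integral_abs_deriv {f f' : ℝ → ℝ} {a b : ℝ} (hab : a < b)
    (hderiv : ∀ t ∈ Icc a b, HasDerivWithinAt f (f' t) (Icc a b) t)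
    (hcont : ContinuousOn f' (Icc a b)) {t : ℝ} (ht : t ∈ Icc a b) :
    |f t| ≤ (∫ s in Ioo a b, |f s|) / (b - a) + ∫ s in Ioo a b, |f' s| := by
  have hf : ContinuousOn f (Icc a b) := fun x hx ↦ (hderiv x hx).continuousWithinAt
  have hpointwise : ∀ s ∈ Ioo a b, |f t| - ∫ x in Ioo a b, |f' x| ≤ |f s| := fun s hs ↦ by
    have := abs_sub_le_integral_abs_deriv hderiv hcont (Ioo_subset_Icc_self hs) ht
    have := abs_sub_abs_le_abs_sub (f t) (f s)
    linarith
  have hmean := setIntegral_ge_of_const_le_real measurableSet_Ioo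
    (measure_Ioo_lt_top (μ := volume)).ne hpointwise
    ((hf.abs.integrableOn_compact isCompact_Icc).mono_set Ioo_subset_Icc_self)
  rw [Real.volume_real_Ioo_of_le hab.le] at hmean
  rwa [← sub_le_iff_le_add, le_div_iff₀ (sub_pos.2 hab)]

/-- For every continuously differentiable `f : [a, b] → ℝ`,
`sup_{t ∈ [a,b]} |f(t)| ≤ (b−a)^{−1/2} ‖f‖_{L²(a,b)} + (b−a)^{1/2} ‖f'‖_{L²(a,b)}`. -/
theorem sup_le_L2_add_L2_deriv (a b : ℝ) (hab : a < b) (f f' : ℝ → ℝ)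
    (hderiv : ∀ t ∈ Set.Icc a b, HasDerivWithinAt f (f' t) (Set.Icc a b) t)
    (hcont : ContinuousOn f' (Set.Icc a b)) :
    ∀ t ∈ Set.Icc a b, |f t| ≤
      (Real.sqrt (b - a))⁻¹ * Real.sqrt (∫ s in Set.Ioo a b, f s ^ 2) +
        Real.sqrt (b - a) * Real.sqrt (∫ s in Set.Ioo a b, f' s ^ 2) := by
  intro t ht
  have hf : ContinuousOn f (Icc a b) := fun x hx ↦ (hderiv x hx).continuousWithinAt
  calc |f t| ≤ (∫ s in Ioo a b, |f s|) / (b - a) + ∫ s in Ioo a b, |f' s| :=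
        abs_le_integral_abs_div_add_integral_abs_deriv hab hderiv hcont ht
    _ ≤ √(b - a) * √(∫ s in Ioo a b, f s ^ 2) / (b - a) +
          √(b - a) * √(∫ s in Ioo a b, f' s ^ 2) := by
        gcongr
        exacts [integral_Ioo_abs_le_sqrt_mul_sqrt_integral_sq hab.le hf,
          integral_Ioo_abs_le_sqrt_mul_sqrt_integral_sq hab.le hcont]
    _ = _ := by rw [mul_div_right_comm, Real.sqrt_div_self', one_div]
end

section
/- For every integer q ≥ 0 there exists a constant C > 0, depending only on q, such that for all real numbers a < b and every real polynomial p of degree at most q, p(a)² + p(b)² ≤ C·(b − a)^{−1}·∫_a^b p(t)² dt. -/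
/-!
After the affine substitution `t ↦ (b - a) t + a`, whose Jacobian accounts for the factor
`(b - a)⁻¹`, it suffices to work on `[0, 1]`. There, on the finite-dimensional space of
coefficient vectors of polynomials of degree at most `q`, both `p(0)² + p(1)²` and `∫₀¹ p²` are
continuous and homogeneous of degree two, and the integral is positive away from `0` because a
nonzero polynomial has only finitely many roots. Comparing the two on the compact unit sphere gives
the constant.
-/

open MeasureTheory

theorem exists_le_mul_of_continuous_of_sq_homogeneous {E : Type*} [NormedAddCommGroup E]
    [NormedSpace ℝ E] [FiniteDimensional ℝ E] {f g : E → ℝ} (hf : Continuous f)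
    (hg : Continuous g) (hf_pos : ∀ v, v ≠ 0 → 0 < f v)
    (hf_smul : ∀ (c : ℝ) v, f (c • v) = c ^ 2 * f v)
    (hg_smul : ∀ (c : ℝ) v, g (c • v) = c ^ 2 * g v) :
    ∃ C, 0 < C ∧ ∀ v, g v ≤ C * f v := by
  have hf_zero : f 0 = 0 := by simpa using hf_smul 0 0
  have hg_zero : g 0 = 0 := by simpa using hg_smul 0 0
  rcases subsingleton_or_nontrivial E with hE | hE
  · exact ⟨1, one_pos, fun v => by simp [Subsingleton.elim v 0, hf_zero, hg_zero]⟩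
  have hS := isCompact_sphere (0 : E) 1
  obtain ⟨u₀, hu₀, hmin⟩ := hS.exists_isMinOn (NormedSpace.sphere_nonempty.mpr zero_le_one)
    hf.continuousOn
  obtain ⟨M, hM⟩ := hS.exists_bound_of_continuousOn hg.continuousOn
  have hm : 0 < f u₀ := hf_pos u₀ (ne_zero_of_mem_unit_sphere ⟨u₀, hu₀⟩)
  have hM₀ : 0 ≤ M := (norm_nonneg _).trans (hM u₀ hu₀)
  refine ⟨(M + 1) / f u₀, by positivity, fun v => ?_⟩
  rcases eq_or_ne v 0 with rfl | hv
  · simp [hf_zero, hg_zero]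
  have hv' : ‖v‖ ≠ 0 := norm_ne_zero_iff.mpr hv
  obtain ⟨u, hu, hvu⟩ : ∃ u ∈ Metric.sphere (0 : E) 1, ‖v‖ • u = v :=
    ⟨‖v‖⁻¹ • v, by simp [norm_smul, hv'], by simp [smul_smul, hv']⟩
  calc g v = ‖v‖ ^ 2 * g u := by rw [← hg_smul, hvu]
    _ ≤ ‖v‖ ^ 2 * (M + 1) := by
      gcongr; linarith [le_abs_self (g u), hM u hu, Real.norm_eq_abs (g u)]
    _ = (M + 1) / f u₀ * (‖v‖ ^ 2 * f u₀) := by field_simp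
    _ ≤ (M + 1) / f u₀ * (‖v‖ ^ 2 * f u) := by gcongr; exact hmin hu
    _ = (M + 1) / f u₀ * f v := by rw [← hf_smul, hvu]

theorem setIntegral_Ioo_zero_one_comp_mul_add {E : Type*} [NormedAddCommGroup E]
    [NormedSpace ℝ E] (f : ℝ → E) {a b : ℝ} (hab : a < b) :
    ∫ t in Set.Ioo 0 1, f ((b - a) * t + a) = (b - a)⁻¹ • ∫ t in Set.Ioo a b, f t := by
  have h := intervalIntegral.integral_comp_mul_add (a := 0) (b := 1) f (sub_ne_zero.mpr hab.ne') a
  rw [mul_zero, zero_add, mul_one, sub_add_cancel] at h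
  rwa [intervalIntegral.integral_of_le zero_le_one, intervalIntegral.integral_of_le hab.le,
    integral_Ioc_eq_integral_Ioo, integral_Ioc_eq_integral_Ioo] at h

namespace Polynomial

theorem eval_ofFn {R : Type*} [Semiring R] [DecidableEq R] (n : ℕ) (v : Fin n → R) (t : R) :
    (ofFn n v).eval t = ∑ i, v i * t ^ (i : ℕ) := by
  simp [ofFn_eq_sum_monomial, eval_finsetSum]

theorem integral_Ioo_eval_sq_pos {p : ℝ[X]} (hp : p ≠ 0) {a b : ℝ} (hab : a < b) :
    0 < ∫ t in Set.Ioo a b, p.eval t ^ 2 := by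
  have hint : Integrable (fun t => p.eval t ^ 2) (volume.restrict (Set.Ioo a b)) :=
    (p.continuous.pow 2).integrableOn_Icc.mono_set Set.Ioo_subset_Icc_self
  rw [integral_pos_iff_support_of_nonneg (fun t => sq_nonneg _) hint,
    Measure.restrict_apply' measurableSet_Ioo]
  have hsub : Set.Ioo a b \ {x | p.IsRoot x} ⊆
      Function.support (fun t => p.eval t ^ 2) ∩ Set.Ioo a b :=
    fun t ht => ⟨pow_ne_zero 2 ht.2, ht.1⟩
  refine lt_of_lt_of_le ?_ (measure_mono hsub)
  rw [measure_sdiff_null ((finite_setOfPred_isRoot hp).measure_zero volume), Real.volume_Ioo]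
  simpa using hab

theorem exists_eval_zero_sq_add_eval_one_sq_le_integral (q : ℕ) :
    ∃ C, 0 < C ∧ ∀ p : ℝ[X], p.natDegree ≤ q →
      p.eval 0 ^ 2 + p.eval 1 ^ 2 ≤ C * ∫ t in Set.Ioo 0 1, p.eval t ^ 2 := by
  obtain ⟨C, hC, h⟩ : ∃ C, 0 < C ∧ ∀ v : Fin (q + 1) → ℝ,
      (ofFn _ v).eval 0 ^ 2 + (ofFn _ v).eval 1 ^ 2 ≤
        C * ∫ t in Set.Ioo 0 1, (ofFn _ v).eval t ^ 2 := by
    refine exists_le_mul_of_continuous_of_sq_homogeneous ?_ ?_ ?_ ?_ ?_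
    · simp_rw [← integral_Icc_eq_integral_Ioo]
      exact continuous_parametric_integral_of_continuous (by simp only [eval_ofFn]; fun_prop)
        isCompact_Icc
    · simp only [eval_ofFn]; fun_prop
    · exact fun v hv => integral_Ioo_eval_sq_pos ((map_ne_zero_iff _ (injective_ofFn _)).mpr hv)
        zero_lt_one
    · simp [mul_pow, integral_const_mul]
    · simp [mul_pow, mul_add]
  refine ⟨C, hC, fun p hp => ?_⟩
  simpa [ofFn_comp_toFn_eq_id_of_natDegree_lt (Nat.lt_succ_of_le hp)] using h (toFn _ p)

end Polynomial

/-- Polynomial trace inequality: for every `q ≥ 0` there is `C > 0`, depending only on `q`,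
such that for all `a < b` and all polynomials `p` of degree at most `q`,
`p(a)² + p(b)² ≤ C (b−a)⁻¹ ∫_a^b p(t)² dt`. -/
theorem polynomial_trace_inequality (q : ℕ) :
    ∃ C : ℝ, 0 < C ∧ ∀ a b : ℝ, a < b → ∀ p : Polynomial ℝ, p.natDegree ≤ q →
      p.eval a ^ 2 + p.eval b ^ 2 ≤
        C * (b - a)⁻¹ * ∫ t in Set.Ioo a b, p.eval t ^ 2 := by
  obtain ⟨C, hC, hunit⟩ := Polynomial.exists_eval_zero_sq_add_eval_one_sq_le_integral q
  refine ⟨C, hC, fun a b hab p hp => ?_⟩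
  set r := p.comp (Polynomial.C (b - a) * Polynomial.X + Polynomial.C a)
  have hr_deg : r.natDegree ≤ q := by
    rw [Polynomial.natDegree_comp]
    exact (Nat.mul_le_mul hp Polynomial.natDegree_linear_le).trans_eq (mul_one q)
  have hr_eval (t : ℝ) : r.eval t = p.eval ((b - a) * t + a) := by simp [r]
  have h := hunit r hr_deg
  simp_rw [hr_eval, setIntegral_Ioo_zero_one_comp_mul_add (fun t => p.eval t ^ 2) hab] at h
  simpa [mul_assoc] using h
end

section
/- There exists a constant C > 0 such that for all real numbers a < b and every continuously differentiable function f : [a, b] → ℝ, f(a)² + f(b)² ≤ C·((b − a)^{−1}·∫_a^b f(t)² dt + (b − a)·∫_a^b f'(t)² dt). -/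
/-!
For a `C¹` function `g` on `[a, b]`, every value `g c` differs from every other value `g t` by at
most `∫ |g'|`; averaging over `t` gives `g c ≤ ⨍ g + ∫ |g'|`. Applied to `g = f²`, whose
derivative is `2 f f'`, at `c = a` and `c = b`, and combined with Young's inequality
`|2 f f'| ≤ (b - a)⁻¹ f² + (b - a) f'²`, this yields the trace inequality with `C = 4`.
-/

open MeasureTheory Set
open scoped Interval

section C1OnIcc

variable {E : Type*} [NormedAddCommGroup E] [NormedSpace ℝ E] [CompleteSpace E]
  {a b : ℝ} {g g' : ℝ → E}

theorem norm_sub_le_integral_norm_deriv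
    (hg : ∀ t ∈ Icc a b, HasDerivWithinAt g (g' t) (Icc a b) t)
    (hg' : ContinuousOn g' (Icc a b)) {s t : ℝ} (hs : s ∈ Icc a b) (ht : t ∈ Icc a b) :
    ‖g s - g t‖ ≤ ∫ u in Ioo a b, ‖g' u‖ := by
  have hsub : [[t, s]] ⊆ Icc a b := uIcc_subset_Icc ht hs
  have hftc : ∫ u in t..s, g' u = g s - g t := by
    refine intervalIntegral.integral_eq_sub_of_hasDeriv_right
      (fun u hu => (hg u (hsub hu)).continuousWithinAt.mono hsub) (fun u hu => ?_)
      (hg'.mono hsub).intervalIntegrable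
    have hu' : u ∈ Ioo a b :=
      Ioo_subset_Ioo (le_min ht.1 hs.1) (max_le ht.2 hs.2) hu
    exact ((hg u (Ioo_subset_Icc_self hu')).hasDerivAt
      (Icc_mem_nhds hu'.1 hu'.2)).hasDerivWithinAt
  calc ‖g s - g t‖ = ‖∫ u in t..s, g' u‖ := by rw [hftc]
    _ ≤ ∫ u in Ι t s, ‖g' u‖ := intervalIntegral.norm_integral_le_integral_norm_uIoc
    _ ≤ ∫ u in Icc a b, ‖g' u‖ :=
      setIntegral_mono_set hg'.norm.integrableOn_Icc (.of_forall fun _ => norm_nonneg _)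
        (uIoc_subset_uIcc.trans hsub).eventuallyLE
    _ = ∫ u in Ioo a b, ‖g' u‖ := integral_Icc_eq_integral_Ioo

end C1OnIcc

theorem le_inv_mul_integral_add_integral_abs_deriv {a b : ℝ} {g g' : ℝ → ℝ} (hab : a < b)
    (hg : ∀ t ∈ Icc a b, HasDerivWithinAt g (g' t) (Icc a b) t)
    (hg' : ContinuousOn g' (Icc a b)) {c : ℝ} (hc : c ∈ Icc a b) :
    g c ≤ (b - a)⁻¹ * (∫ t in Ioo a b, g t) + ∫ t in Ioo a b, |g' t| := by
  set K := ∫ t in Ioo a b, |g' t|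
  have hd : 0 < b - a := sub_pos.2 hab
  have hgc : ∀ t ∈ Ioo a b, g c ≤ g t + K := fun t ht => by
    have hdiff := norm_sub_le_integral_norm_deriv hg hg' hc (Ioo_subset_Icc_self ht)
    simp only [Real.norm_eq_abs] at hdiff
    linarith [le_abs_self (g c - g t)]
  have hgi : IntegrableOn g (Ioo a b) :=
    (HasDerivWithinAt.continuousOn hg).integrableOn_Icc.mono_set Ioo_subset_Icc_self
  have hconst : ∀ x : ℝ, ∫ _ in Ioo a b, x = (b - a) * x := fun x => by
    simp [measureReal_def, Real.volume_Ioo, hd.le]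
  have hint : (b - a) * g c ≤ (∫ t in Ioo a b, g t) + (b - a) * K := by
    rw [← hconst, ← hconst, ← integral_add hgi (integrableOn_const measure_Ioo_lt_top.ne)]
    exact setIntegral_mono_on (integrableOn_const measure_Ioo_lt_top.ne)
      (hgi.add (integrableOn_const measure_Ioo_lt_top.ne)) measurableSet_Ioo hgc
  calc g c = (b - a)⁻¹ * ((b - a) * g c) := by field_simp
    _ ≤ (b - a)⁻¹ * ((∫ t in Ioo a b, g t) + (b - a) * K) := by gcongr
    _ = _ := by field_simp

theorem abs_two_mul_mul_le {d : ℝ} (hd : 0 < d) (x y : ℝ) :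
    |2 * x * y| ≤ d⁻¹ * x ^ 2 + d * y ^ 2 := by
  have hamgm := two_mul_le_add_sq |x| (d * |y|)
  rw [abs_mul, abs_mul, abs_two, ← mul_le_mul_iff_right₀ hd]
  field_simp
  nlinarith [sq_abs x, sq_abs y]

theorem integral_abs_two_mul_mul_le {α : Type*} [MeasurableSpace α] {μ : Measure α}
    {u v : α → ℝ} {d : ℝ} (hd : 0 < d) (hu : Integrable (fun t => u t ^ 2) μ)
    (hv : Integrable (fun t => v t ^ 2) μ) :
    ∫ t, |2 * u t * v t| ∂μ ≤ d⁻¹ * (∫ t, u t ^ 2 ∂μ) + d * ∫ t, v t ^ 2 ∂μ := by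
  rw [← integral_const_mul, ← integral_const_mul,
    ← integral_add (hu.const_mul _) (hv.const_mul _)]
  exact integral_mono_of_nonneg (.of_forall fun _ => abs_nonneg _)
    ((hu.const_mul _).add (hv.const_mul _)) (.of_forall fun t => abs_two_mul_mul_le hd _ _)

/-- Trace inequality: there is `C > 0` such that for all `a < b` and every continuously
differentiable `f : [a, b] → ℝ`,
`f(a)² + f(b)² ≤ C ((b−a)⁻¹ ∫_a^b f² + (b−a) ∫_a^b (f')²)`. -/
theorem trace_inequality :
    ∃ C : ℝ, 0 < C ∧ ∀ a b : ℝ, a < b → ∀ f f' : ℝ → ℝ,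
      (∀ t ∈ Set.Icc a b, HasDerivWithinAt f (f' t) (Set.Icc a b) t) →
      ContinuousOn f' (Set.Icc a b) →
      f a ^ 2 + f b ^ 2 ≤
        C * ((b - a)⁻¹ * (∫ t in Set.Ioo a b, f t ^ 2) +
          (b - a) * ∫ t in Set.Ioo a b, f' t ^ 2) := by
  refine ⟨4, four_pos, fun a b hab f f' hf hf' => ?_⟩
  have hsq : ∀ t ∈ Icc a b, HasDerivWithinAt (fun t => f t ^ 2) (2 * f t * f' t) (Icc a b) t :=
    fun t ht => by simpa using (hf t ht).fun_pow 2
  have hsq' : ContinuousOn (fun t => 2 * f t * f' t) (Icc a b) :=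
    (continuousOn_const.mul (HasDerivWithinAt.continuousOn hf)).mul hf'
  have hA := le_inv_mul_integral_add_integral_abs_deriv hab hsq hsq' (left_mem_Icc.2 hab.le)
  have hB := le_inv_mul_integral_add_integral_abs_deriv hab hsq hsq' (right_mem_Icc.2 hab.le)
  have hK := integral_abs_two_mul_mul_le (μ := volume.restrict (Ioo a b)) (sub_pos.2 hab)
    ((HasDerivWithinAt.continuousOn hf).pow 2 |>.integrableOn_Icc.mono_set Ioo_subset_Icc_self)
    (hf'.pow 2 |>.integrableOn_Icc.mono_set Ioo_subset_Icc_self)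
  have hI : 0 ≤ (b - a) * ∫ t in Ioo a b, f' t ^ 2 :=
    mul_nonneg (sub_pos.2 hab).le (setIntegral_nonneg measurableSet_Ioo fun _ _ => sq_nonneg _)
  linarith
end

section
/- Let q ≥ 2 be an integer, let a < b be real numbers, let α ∈ ℝ, and let w : [a, b] → ℝ be continuous. Then there exists a unique real polynomial p of degree at most q such that p(a) = α, p'(b) = w(b), and ∫_a^b (p'(t) − w(t))·r(t) dt = 0 for every real polynomial r of degree at most q − 2. -/
/-!
The data `p(a)`, `p'(b)` and the moments `r ↦ ∫_a^b p' r` (`deg r ≤ q - 2`) form a linear map from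
polynomials of degree `≤ q` to a space of the same dimension `q + 1`, so it suffices to show that
it is injective. If `p` is in its kernel, then `u = p'` has degree `≤ q - 1`, vanishes at `b` and
is orthogonal on `(a, b)` to all polynomials of degree `≤ q - 2`. Writing `u = (X - b) s` and
pairing `u` with `s` gives `∫_a^b (b - t) s(t)² dt = 0`, so `s = 0`; hence `p' = 0` and
`p = p(a) = 0`.
-/

open MeasureTheory Set Polynomial

namespace Polynomial

theorem mem_degreeLT_succ_iff_natDegree_le {R : Type*} [Semiring R] {p : R[X]} {n : ℕ} :
    p ∈ degreeLT R (n + 1) ↔ p.natDegree ≤ n := by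
  rw [degreeLT_succ_eq_degreeLE, mem_degreeLE, natDegree_le_iff_degree_le]

theorem finrank_degreeLT {R : Type*} [Ring R] [StrongRankCondition R] (n : ℕ) :
    Module.finrank R (degreeLT R n) = n := by
  simp [Module.finrank_eq_card_basis (degreeLT.basis R n)]

section Interval

variable {a b : ℝ}

theorem integrableOn_Ioo_mul_eval {f : ℝ → ℝ} (hf : ContinuousOn f (Icc a b)) (r : ℝ[X]) :
    IntegrableOn (fun t => f t * r.eval t) (Ioo a b) :=
  (hf.mul r.continuous.continuousOn).integrableOn_Icc.mono_set Ioo_subset_Icc_self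

theorem eq_zero_of_setIntegral_mul_sq_eq_zero (hab : a < b) {f : ℝ → ℝ}
    (hf : ContinuousOn f (Icc a b)) (hpos : ∀ t ∈ Ioo a b, 0 < f t) {s : ℝ[X]}
    (h : ∫ t in Ioo a b, f t * s.eval t ^ 2 = 0) : s = 0 := by
  have hint : IntegrableOn (fun t => f t * s.eval t ^ 2) (Ioo a b) := by
    have := integrableOn_Ioo_mul_eval hf (s ^ 2)
    simp only [eval_pow] at this
    exact this
  have hnonneg : 0 ≤ᵐ[volume.restrict (Ioo a b)] fun t => f t * s.eval t ^ 2 :=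
    (ae_restrict_iff' measurableSet_Ioo).2 <|
      ae_of_all _ fun t ht => mul_nonneg (hpos t ht).le (sq_nonneg _)
  have hzero : EqOn (fun t => f t * s.eval t ^ 2) 0 (Ioo a b) :=
    Measure.eqOn_open_of_ae_eq ((integral_eq_zero_iff_of_nonneg_ae hnonneg hint).1 h) isOpen_Ioo
      ((hf.mono Ioo_subset_Icc_self).mul (s.continuous.pow 2).continuousOn) continuousOn_const
  refine eq_zero_of_infinite_isRoot s ((Ioo_infinite hab).mono fun t ht => ?_)
  simpa [(hpos t ht).ne'] using hzero ht

theorem eq_zero_of_eval_eq_zero_of_orthogonal (hab : a < b) {n : ℕ} {u : ℝ[X]}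
    (hu : u.natDegree ≤ n + 1) (hb : u.eval b = 0)
    (horth : ∀ r : ℝ[X], r.natDegree ≤ n → ∫ t in Ioo a b, u.eval t * r.eval t = 0) :
    u = 0 := by
  set s := u /ₘ (X - C b)
  have hus : (X - C b) * s = u := mul_divByMonic_eq_iff_isRoot.2 hb
  have hs : s.natDegree ≤ n := by
    rw [natDegree_divByMonic _ (monic_X_sub_C b), natDegree_X_sub_C]; omega
  have hweighted : ∫ t in Ioo a b, (b - t) * s.eval t ^ 2 = 0 := by
    have := horth s hs
    rw [← hus] at this
    simp only [eval_mul, eval_sub, eval_X, eval_C] at this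
    rw [← neg_eq_zero, ← integral_neg, ← this]
    congr 1 with t; ring
  have hs0 : s = 0 := eq_zero_of_setIntegral_mul_sq_eq_zero hab (by fun_prop)
    (fun t ht => sub_pos.2 ht.2) hweighted
  rw [← hus, hs0, mul_zero]

noncomputable def integralMulEvalₗ (a b : ℝ) (f : ℝ → ℝ) (hf : ContinuousOn f (Icc a b)) :
    ℝ[X] →ₗ[ℝ] ℝ where
  toFun r := ∫ t in Ioo a b, f t * r.eval t
  map_add' r s := by
    simp only [eval_add, mul_add]
    exact integral_add (integrableOn_Ioo_mul_eval hf r) (integrableOn_Ioo_mul_eval hf s)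
  map_smul' c r := by
    simp only [eval_smul, smul_eq_mul, RingHom.id_apply, mul_left_comm _ c]
    exact integral_const_mul c _

@[simp]
theorem integralMulEvalₗ_apply (f : ℝ → ℝ) (hf : ContinuousOn f (Icc a b)) (r : ℝ[X]) :
    integralMulEvalₗ a b f hf r = ∫ t in Ioo a b, f t * r.eval t :=
  rfl

end Interval

section BoundaryMoment

variable (a b : ℝ) (n : ℕ)

-- Indexed by `n = q - 2`, so that no truncated subtraction enters the degree bounds.
noncomputable def boundaryMomentMap :
    degreeLT ℝ (n + 3) →ₗ[ℝ] ℝ × ℝ × Module.Dual ℝ (degreeLT ℝ (n + 1)) where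
  toFun p := (p.1.eval a, (derivative p.1).eval b,
    integralMulEvalₗ a b (derivative p.1).eval (derivative p.1).continuous.continuousOn ∘ₗ
      (degreeLT ℝ (n + 1)).subtype)
  map_add' p q := by
    refine Prod.ext (eval_add ..) (Prod.ext (by simp) (LinearMap.ext fun r => ?_))
    simp only [Submodule.coe_add, derivative_add, eval_add, add_mul, LinearMap.coe_comp,
      Function.comp_apply, integralMulEvalₗ_apply]
    exact integral_add (integrableOn_Ioo_mul_eval (by fun_prop) _)
      (integrableOn_Ioo_mul_eval (by fun_prop) _)
  map_smul' c p := by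
    refine Prod.ext (by simp) (Prod.ext (by simp) (LinearMap.ext fun r => ?_))
    simp only [SetLike.val_smul, derivative_smul, eval_smul, smul_eq_mul, mul_assoc,
      LinearMap.coe_comp, Function.comp_apply, integralMulEvalₗ_apply, RingHom.id_apply]
    exact integral_const_mul c _

variable {a b n}

theorem boundaryMomentMap_injective (hab : a < b) :
    Function.Injective (boundaryMomentMap a b n) := by
  refine (injective_iff_map_eq_zero _).2 fun ⟨p, hp⟩ hTp => ?_
  simp only [boundaryMomentMap, LinearMap.coe_mk, AddHom.coe_mk, Prod.mk_eq_zero] at hTp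
  obtain ⟨ha, hb, horth⟩ := hTp
  have hdeg : p.natDegree ≤ n + 2 := mem_degreeLT_succ_iff_natDegree_le.1 hp
  have hder : derivative p = 0 := by
    refine eq_zero_of_eval_eq_zero_of_orthogonal hab
      ((natDegree_derivative_le p).trans (by omega : p.natDegree - 1 ≤ n + 1)) hb fun r hr => ?_
    simpa using LinearMap.congr_fun horth ⟨r, mem_degreeLT_succ_iff_natDegree_le.2 hr⟩
  rw [eq_C_of_derivative_eq_zero hder, eval_C] at ha
  exact Subtype.ext <|
    (eq_C_of_derivative_eq_zero hder).trans (by rw [ha, map_zero, Submodule.coe_zero])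

theorem boundaryMomentMap_bijective (hab : a < b) :
    Function.Bijective (boundaryMomentMap a b n) := by
  have hinj := boundaryMomentMap_injective (n := n) hab
  refine ⟨hinj, (LinearMap.injective_iff_surjective_of_finrank_eq_finrank ?_).1 hinj⟩
  simp only [Module.finrank_prod, Module.finrank_self, Subspace.dual_finrank_eq, finrank_degreeLT]
  omega

theorem boundaryMomentMap_eq_iff {p : ℝ[X]} (hp : p ∈ degreeLT ℝ (n + 3)) {α β : ℝ}
    {f : ℝ → ℝ} (hf : ContinuousOn f (Icc a b)) :
    boundaryMomentMap a b n ⟨p, hp⟩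
        = (α, β, integralMulEvalₗ a b f hf ∘ₗ (degreeLT ℝ (n + 1)).subtype) ↔
      p.eval a = α ∧ (derivative p).eval b = β ∧
        ∀ r : ℝ[X], r.natDegree ≤ n →
          ∫ t in Ioo a b, ((derivative p).eval t - f t) * r.eval t = 0 := by
  simp only [boundaryMomentMap, LinearMap.coe_mk, AddHom.coe_mk, Prod.mk.injEq,
    LinearMap.ext_iff, LinearMap.coe_comp, Function.comp_apply, Submodule.coe_subtype,
    integralMulEvalₗ_apply, Subtype.forall, mem_degreeLT_succ_iff_natDegree_le]
  refine and_congr_right' (and_congr_right' (forall₂_congr fun r _ => ?_))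
  simp_rw [sub_mul]
  rw [integral_sub (integrableOn_Ioo_mul_eval (by fun_prop) r) (integrableOn_Ioo_mul_eval hf r),
    sub_eq_zero]

end BoundaryMoment

end Polynomial

/-- Existence and uniqueness of the projection `𝒫_τ`: for `q ≥ 2`, `a < b`, `α ∈ ℝ`, and
continuous `w : [a, b] → ℝ`, there is a unique polynomial `p` of degree at most `q` with
`p(a) = α`, `p'(b) = w(b)`, and `∫_a^b (p'(t) − w(t)) r(t) dt = 0` for all polynomials `r`
of degree at most `q − 2`. -/
theorem projection_Pt_exists_unique (q : ℕ) (hq : 2 ≤ q) (a b : ℝ) (hab : a < b)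
    (α : ℝ) (w : ℝ → ℝ) (hw : ContinuousOn w (Set.Icc a b)) :
    ∃! p : Polynomial ℝ,
      p.natDegree ≤ q ∧
      p.eval a = α ∧
      (Polynomial.derivative p).eval b = w b ∧
      ∀ r : Polynomial ℝ, r.natDegree ≤ q - 2 →
        ∫ t in Set.Ioo a b, ((Polynomial.derivative p).eval t - w t) * r.eval t = 0 := by
  obtain ⟨n, rfl⟩ : ∃ n, q = n + 2 := ⟨q - 2, by omega⟩
  rw [Nat.add_sub_cancel]
  obtain ⟨⟨p, hp⟩, hTp, huniq⟩ := (boundaryMomentMap_bijective (n := n) hab).existsUnique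
    (α, w b, integralMulEvalₗ a b w hw ∘ₗ (degreeLT ℝ (n + 1)).subtype)
  refine ⟨p, ⟨mem_degreeLT_succ_iff_natDegree_le.1 hp, (boundaryMomentMap_eq_iff hp hw).1 hTp⟩,
    fun p₂ ⟨hdeg₂, hp₂⟩ => ?_⟩
  have hmem₂ := mem_degreeLT_succ_iff_natDegree_le.2 hdeg₂
  exact congrArg Subtype.val (huniq ⟨p₂, hmem₂⟩ ((boundaryMomentMap_eq_iff hmem₂ hw).2 hp₂))
end

section
/- Let q ≥ 2 and m with 1 ≤ m ≤ q be integers. There exists a constant C > 0, depending only on q and m, such that for all real numbers a < b, every m-times continuously differentiable function w : [a, b] → ℝ, and every real polynomial g of degree at most q − 1 satisfying g(b) = w(b) and ∫_a^b (g(t) − w(t))·r(t) dt = 0 for every real polynomial r of degree at most q − 2, one has (∫_a^b (w(t) − g(t))² dt)^{1/2} ≤ C·(b − a)^m·(∫_a^b (w^{(m)}(t))² dt)^{1/2}, where w^{(m)} denotes the m-th derivative of w. -/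
/-!
Let `p` be the Taylor polynomial of `w` of degree `m - 1` at `b`; by the integral form of the
remainder, `|w - p| ≤ ε := (b - a)^(m - 1) / (m - 1)! · ∫ |w⁽ᵐ⁾|` on `[a, b]`. The polynomial
`h = g - p` vanishes at `b`, and since `g - w` is orthogonal to polynomials of degree `≤ q - 2`,
its moments against `((t - a) / (b - a))ʲ` equal those of `w - p`, so they are at most
`(b - a) ε`. Rescaled to `[0, 1]`, these moments together with the value at `1` form an injective
linear map on polynomials of degree `≤ q - 1` (if `h = (X - 1) k` is orthogonal to `k`, then
`∫ (1 - s) k² = 0`), so by finite-dimensionality they bound `h` uniformly: `|h| ≤ K ε` with `K`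
independent of `a` and `b`. Hence `|w - g| ≤ (1 + K) ε` on `[a, b]`, and squaring, integrating
and applying Cauchy–Schwarz to `ε` gives the claim.
-/

open MeasureTheory Polynomial Set
open scoped Nat

theorem intervalIntegral.integral_abs_le_sqrt_mul_sqrt {f : ℝ → ℝ} {a b : ℝ} (hab : a < b)
    (hf : ContinuousOn f (Icc a b)) :
    ∫ t in a..b, |f t| ≤ √(b - a) * √(∫ t in a..b, f t ^ 2) := by
  set A := ∫ t in a..b, |f t|
  set B := ∫ t in a..b, f t ^ 2
  have hf' : ContinuousOn f (uIcc a b) := by rwa [uIcc_of_le hab.le]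
  -- expand `0 ≤ ∫ (|f| - c)²`, then take for `c` the mean of `|f|`
  have hvar (c : ℝ) : 0 ≤ B - 2 * c * A + c ^ 2 * (b - a) := by
    have h0 : 0 ≤ ∫ t in a..b, (|f t| - c) ^ 2 :=
      integral_nonneg hab.le fun t _ => sq_nonneg _
    have hexp : ∀ t, (|f t| - c) ^ 2 = f t ^ 2 - 2 * c * |f t| + c ^ 2 := fun t => by
      rw [sub_sq, sq_abs]; ring
    simp_rw [hexp] at h0
    rwa [intervalIntegral.integral_add, intervalIntegral.integral_sub,
      intervalIntegral.integral_const_mul, intervalIntegral.integral_const, smul_eq_mul,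
      mul_comm (b - a)] at h0
    all_goals exact ContinuousOn.intervalIntegrable (by fun_prop)
  have hba : 0 < b - a := sub_pos.mpr hab
  have := hvar (A / (b - a))
  rw [← Real.sqrt_mul hba.le]
  apply Real.le_sqrt_of_sq_le
  field_simp at this
  nlinarith

theorem intervalIntegral.sqrt_integral_sq_le {f : ℝ → ℝ} {a b M : ℝ} (hab : a ≤ b)
    (hf : ContinuousOn f (Icc a b)) (hM : ∀ t ∈ Icc a b, |f t| ≤ M) :
    √(∫ t in a..b, f t ^ 2) ≤ √(b - a) * M := by
  have hM0 : 0 ≤ M := (abs_nonneg _).trans (hM a (left_mem_Icc.mpr hab))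
  have hle : ∫ t in a..b, f t ^ 2 ≤ ∫ t in a..b, M ^ 2 :=
    intervalIntegral.integral_mono_on hab
      (ContinuousOn.intervalIntegrable_of_Icc hab (by fun_prop)) intervalIntegrable_const
      fun t ht => sq_le_sq' (abs_le.mp (hM t ht)).1 (abs_le.mp (hM t ht)).2
  rw [intervalIntegral.integral_const, smul_eq_mul] at hle
  calc √(∫ t in a..b, f t ^ 2) ≤ √((b - a) * M ^ 2) := Real.sqrt_le_sqrt hle
    _ = √(b - a) * M := by rw [Real.sqrt_mul (sub_nonneg.mpr hab), Real.sqrt_sq hM0]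

theorem exists_natDegree_le_eval_eq_taylorWithinEval (f : ℝ → ℝ) (n : ℕ) (s : Set ℝ) (x₀ : ℝ) :
    ∃ p : ℝ[X], p.natDegree ≤ n ∧ ∀ x, p.eval x = taylorWithinEval f n s x₀ x := by
  refine ⟨∑ k ∈ Finset.range (n + 1),
    C ((k ! : ℝ)⁻¹ * iteratedDerivWithin k f s x₀) * (X - C x₀) ^ k, ?_, fun x => ?_⟩
  · refine natDegree_sum_le_of_forall_le _ _ fun k hk => ?_
    have := Finset.mem_range.mp hk
    compute_degree
    omega
  · simp only [taylor_within_apply, eval_finsetSum, eval_mul, eval_C, eval_pow, eval_sub, eval_X,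
      smul_eq_mul]
    exact Finset.sum_congr rfl fun k _ => by ring

theorem taylorWithinEval_sub_eq_integral {f : ℝ → ℝ} {a b x : ℝ} {n : ℕ} (hab : a < b)
    (hf : ContDiffOn ℝ (n + 1) f (Icc a b)) (hx : x ∈ Icc a b) :
    taylorWithinEval f n (Icc a b) b x - f x =
      ∫ t in x..b, (n ! : ℝ)⁻¹ * (x - t) ^ n * iteratedDerivWithin (n + 1) f (Icc a b) t := by
  have hIcc : Icc x b ⊆ Icc a b := Icc_subset_Icc_left hx.1
  have hfn : ContDiffOn ℝ n f (Icc a b) := hf.of_le (by exact_mod_cast n.le_succ)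
  have hderiv := hf.differentiableOn_iteratedDerivWithin (by exact_mod_cast n.lt_succ_self)
    (uniqueDiffOn_Icc hab)
  have hcont := (hf.continuousOn_iteratedDerivWithin le_rfl (uniqueDiffOn_Icc hab)).mono hIcc
  -- fundamental theorem of calculus for `y ↦ taylorWithinEval f n (Icc a b) y x` on `[x, b]`
  rw [← taylorWithinEval_self f n (Icc a b) x]
  refine (intervalIntegral.integral_eq_sub_of_hasDeriv_right_of_le hx.2
    ((continuousOn_taylorWithinEval (uniqueDiffOn_Icc hab) hfn).mono hIcc)
    (fun t ht => (taylorWithinEval_hasDerivAt_Ioo x hab (Ioo_subset_Ioo_left hx.1 ht) hfn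
      (hderiv.mono Ioo_subset_Icc_self)).hasDerivWithinAt) ?_).symm
  rw [intervalIntegrable_iff_integrableOn_Icc_of_le hx.2]
  exact ContinuousOn.integrableOn_Icc (by simp only [smul_eq_mul]; fun_prop)

theorem abs_sub_taylorWithinEval_le {f : ℝ → ℝ} {a b x : ℝ} {n : ℕ} (hab : a < b)
    (hf : ContDiffOn ℝ (n + 1) f (Icc a b)) (hx : x ∈ Icc a b) :
    |f x - taylorWithinEval f n (Icc a b) b x| ≤
      (b - a) ^ n / n ! * ∫ t in a..b, |iteratedDerivWithin (n + 1) f (Icc a b) t| := by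
  set g := iteratedDerivWithin (n + 1) f (Icc a b)
  have hg := hf.continuousOn_iteratedDerivWithin le_rfl (uniqueDiffOn_Icc hab)
  have hgx : ContinuousOn g (Icc x b) := hg.mono (Icc_subset_Icc_left hx.1)
  calc |f x - taylorWithinEval f n (Icc a b) b x|
      = |∫ t in x..b, (n ! : ℝ)⁻¹ * (x - t) ^ n * g t| := by
        rw [abs_sub_comm, taylorWithinEval_sub_eq_integral hab hf hx]
    _ ≤ ∫ t in x..b, |(n ! : ℝ)⁻¹ * (x - t) ^ n * g t| :=
        intervalIntegral.abs_integral_le_integral_abs hx.2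
    _ ≤ ∫ t in x..b, (b - a) ^ n / n ! * |g t| := by
        refine intervalIntegral.integral_mono_on hx.2
          (ContinuousOn.intervalIntegrable_of_Icc hx.2 (by fun_prop))
          (ContinuousOn.intervalIntegrable_of_Icc hx.2 (by fun_prop)) fun t ht => ?_
        rw [abs_mul, abs_mul, abs_pow, abs_inv, Nat.abs_cast, div_eq_inv_mul]
        gcongr
        rw [abs_sub_comm, abs_of_nonneg (sub_nonneg.mpr ht.1)]
        linarith [hx.1, ht.2]
    _ = (b - a) ^ n / n ! * ∫ t in x..b, |g t| := intervalIntegral.integral_const_mul _ _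
    _ ≤ (b - a) ^ n / n ! * ∫ t in a..b, |g t| := by
        gcongr
        exact intervalIntegral.integral_mono_interval hx.1 hx.2 le_rfl
          (Filter.Eventually.of_forall fun t => abs_nonneg _)
          (hg.abs.intervalIntegrable_of_Icc hab.le)

theorem sub_div_sub_mem_Icc {a b t : ℝ} (hab : a < b) (ht : t ∈ Icc a b) :
    (t - a) / (b - a) ∈ Icc (0 : ℝ) 1 :=
  ⟨div_nonneg (sub_nonneg.mpr ht.1) (sub_pos.mpr hab).le,
    (div_le_one (sub_pos.mpr hab)).mpr (sub_le_sub_right ht.2 a)⟩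

namespace Polynomial

noncomputable def unitIntervalMoment (j : ℕ) : ℝ[X] →ₗ[ℝ] ℝ where
  toFun h := ∫ s in (0 : ℝ)..1, h.eval s * s ^ j
  map_add' p q := by
    simp only [eval_add, add_mul]
    exact intervalIntegral.integral_add (Continuous.intervalIntegrable (by fun_prop) _ _)
      (Continuous.intervalIntegrable (by fun_prop) _ _)
  map_smul' c p := by simp [mul_assoc]

theorem unitIntervalMoment_apply (j : ℕ) (h : ℝ[X]) :
    unitIntervalMoment j h = ∫ s in (0 : ℝ)..1, h.eval s * s ^ j := rfl

theorem eq_zero_of_eval_one_eq_zero_of_unitIntervalMoment_eq_zero {h : ℝ[X]} {n : ℕ}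
    (hdeg : h.natDegree ≤ n) (h1 : h.eval 1 = 0) (hmom : ∀ j < n, unitIntervalMoment j h = 0) :
    h = 0 := by
  obtain ⟨k, rfl⟩ := dvd_iff_isRoot.mpr h1
  by_contra hne
  have hk : k ≠ 0 := right_ne_zero_of_mul hne
  have hkdeg : k.natDegree < n := by
    rw [natDegree_mul (X_sub_C_ne_zero 1) hk, natDegree_X_sub_C] at hdeg
    omega
  have horth : ∫ s in (0 : ℝ)..1, ((X - C 1) * k).eval s * k.eval s = 0 := by
    simp_rw [eval_eq_sum_range' hkdeg, Finset.mul_sum]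
    rw [intervalIntegral.integral_finsetSum
      fun j _ => Continuous.intervalIntegrable (by fun_prop) _ _]
    refine Finset.sum_eq_zero fun j hj => ?_
    simp_rw [mul_left_comm _ (k.coeff j)]
    rw [intervalIntegral.integral_const_mul, ← unitIntervalMoment_apply,
      hmom j (Finset.mem_range.mp hj), mul_zero]
  have hpos : 0 < ∫ s in (0 : ℝ)..1, (1 - s) * k.eval s ^ 2 := by
    obtain ⟨c, hc, hkc⟩ :=
      (Ioo_infinite zero_lt_one).exists_notMem_finite (finite_setOfPred_isRoot hk)
    refine intervalIntegral.integral_pos zero_lt_one (by fun_prop) (fun s hs => ?_)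
      ⟨c, Ioo_subset_Icc_self hc, ?_⟩
    · exact mul_nonneg (by linarith [hs.2]) (sq_nonneg _)
    · exact mul_pos (by linarith [hc.2]) (pow_pos (abs_pos.mpr hkc) 2 |>.trans_eq (sq_abs _))
  have hneg : ∀ s, ((X - C 1) * k).eval s * k.eval s = -((1 - s) * k.eval s ^ 2) := fun s => by
    simp only [eval_mul, eval_sub, eval_X, eval_C]; ring
  simp_rw [hneg, intervalIntegral.integral_neg] at horth
  linarith

theorem exists_abs_eval_le_of_abs_unitIntervalMoment_le (n : ℕ) :
    ∃ K : ℝ, 0 ≤ K ∧ ∀ h : ℝ[X], h.natDegree ≤ n → h.eval 1 = 0 → ∀ D : ℝ, 0 ≤ D →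
      (∀ j < n, |unitIntervalMoment j h| ≤ D) → ∀ s ∈ Icc (0 : ℝ) 1, |h.eval s| ≤ K * D := by
  let Φ : (Fin (n + 1) → ℝ) →ₗ[ℝ] (Fin n → ℝ) × ℝ :=
    ((LinearMap.pi fun j : Fin n => unitIntervalMoment j).prod (leval 1)) ∘ₗ
      (degreeLT ℝ (n + 1)).subtype ∘ₗ (degreeLTEquiv ℝ (n + 1)).symm.toLinearMap
  have hΦ : LinearMap.ker Φ = ⊥ := by
    refine LinearMap.ker_eq_bot'.mpr fun c hc => (degreeLTEquiv ℝ (n + 1)).symm.injective ?_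
    rw [map_zero, Subtype.ext_iff, Submodule.coe_zero]
    simp only [Φ, LinearMap.comp_apply, LinearMap.prod_apply, Prod.ext_iff, funext_iff] at hc
    refine eq_zero_of_eval_one_eq_zero_of_unitIntervalMoment_eq_zero (n := n) ?_ hc.2
      fun j hj => hc.1 ⟨j, hj⟩
    rw [natDegree_le_iff_degree_le, ← mem_degreeLE, ← degreeLT_succ_eq_degreeLE]
    exact Subtype.prop _
  obtain ⟨K, -, hK⟩ := Φ.exists_antilipschitzWith hΦ
  refine ⟨(n + 1) * K, by positivity, fun h hdeg h1 D hD hmom s hs => ?_⟩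
  have hmem : h ∈ degreeLT ℝ (n + 1) := by
    rwa [degreeLT_succ_eq_degreeLE, mem_degreeLE, ← natDegree_le_iff_degree_le]
  set c := degreeLTEquiv ℝ (n + 1) ⟨h, hmem⟩
  have hc : ‖c‖ ≤ K * D := by
    refine (hK.le_mul_norm (map_zero Φ) c).trans (mul_le_mul_of_nonneg_left ?_ K.2)
    simp only [Φ, c, LinearMap.comp_apply, LinearEquiv.coe_coe, LinearEquiv.symm_apply_apply]
    refine norm_prod_le_iff.mpr ⟨(pi_norm_le_iff_of_nonneg hD).mpr fun j => hmom j j.2, ?_⟩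
    simpa [h1] using hD
  calc |h.eval s| = |∑ i, c i * s ^ (i : ℕ)| := by rw [eval_eq_sum_degreeLTEquiv hmem]
    _ ≤ ∑ i : Fin (n + 1), K * D := by
      refine (Finset.abs_sum_le_sum_abs _ _).trans (Finset.sum_le_sum fun i _ => ?_)
      rw [abs_mul, abs_pow, abs_of_nonneg hs.1]
      calc |c i| * s ^ (i : ℕ) ≤ ‖c‖ * 1 :=
            mul_le_mul (norm_le_pi_norm c i) (pow_le_one₀ hs.1 hs.2) (pow_nonneg hs.1 _)
              (norm_nonneg c)
        _ ≤ K * D := by rw [mul_one]; exact hc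
    _ = (n + 1) * K * D := by simp; ring

theorem exists_abs_eval_le_of_abs_integral_mul_pow_le (n : ℕ) :
    ∃ K : ℝ, 0 ≤ K ∧ ∀ a b : ℝ, a < b → ∀ h : ℝ[X], h.natDegree ≤ n → h.eval b = 0 →
      ∀ D : ℝ, 0 ≤ D →
      (∀ j < n, |∫ t in a..b, h.eval t * ((t - a) / (b - a)) ^ j| ≤ (b - a) * D) →
      ∀ t ∈ Icc a b, |h.eval t| ≤ K * D := by
  obtain ⟨K, hK0, hK⟩ := exists_abs_eval_le_of_abs_unitIntervalMoment_le n
  refine ⟨K, hK0, fun a b hab h hdeg hb D hD hmom t ht => ?_⟩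
  have hba : 0 < b - a := sub_pos.mpr hab
  set ℓ : ℝ[X] := C (b - a) * X + C a
  have hℓ (s : ℝ) : ℓ.eval s = (b - a) * s + a := by simp [ℓ]
  have hdeg' : (h.comp ℓ).natDegree ≤ n :=
    natDegree_comp_le.trans ((Nat.mul_le_mul hdeg natDegree_linear_le).trans_eq (mul_one n))
  have hmom' (j : ℕ) (hj : j < n) : |unitIntervalMoment j (h.comp ℓ)| ≤ D := by
    have hsub : unitIntervalMoment j (h.comp ℓ) =
        (b - a)⁻¹ * ∫ t in a..b, h.eval t * ((t - a) / (b - a)) ^ j := by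
      have := intervalIntegral.integral_comp_mul_add (a := 0) (b := 1)
        (fun t => h.eval t * ((t - a) / (b - a)) ^ j) hba.ne' a
      rw [mul_zero, mul_one, zero_add, sub_add_cancel, smul_eq_mul] at this
      rw [unitIntervalMoment_apply, ← this]
      refine intervalIntegral.integral_congr fun s _ => ?_
      simp only [eval_comp, hℓ, add_sub_cancel_right, mul_div_cancel_left₀ _ hba.ne']
    rw [hsub, abs_mul, abs_inv, abs_of_pos hba, inv_mul_le_iff₀ hba]
    exact hmom j hj
  have := hK (h.comp ℓ) hdeg' (by simp [hℓ, hb]) D hD hmom' _ (sub_div_sub_mem_Icc hab ht)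
  rwa [eval_comp, hℓ, mul_div_cancel₀ _ hba.ne', sub_add_cancel] at this

theorem exists_abs_sub_eval_le_of_integral_mul_eq_zero (n : ℕ) :
    ∃ K : ℝ, 0 ≤ K ∧ ∀ a b : ℝ, a < b → ∀ w : ℝ → ℝ, ContinuousOn w (Icc a b) →
      ∀ g p : ℝ[X], g.natDegree ≤ n → p.natDegree ≤ n → g.eval b = w b → p.eval b = w b →
      (∀ r : ℝ[X], r.natDegree < n → ∫ t in a..b, (g.eval t - w t) * r.eval t = 0) →
      ∀ ε : ℝ, (∀ t ∈ Icc a b, |w t - p.eval t| ≤ ε) →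
      ∀ t ∈ Icc a b, |w t - g.eval t| ≤ (1 + K) * ε := by
  obtain ⟨K, hK0, hK⟩ := exists_abs_eval_le_of_abs_integral_mul_pow_le n
  refine ⟨K, hK0, fun a b hab w hw g p hg hp hgb hpb horth ε hε t ht => ?_⟩
  have hε0 : 0 ≤ ε := (abs_nonneg _).trans (hε b (right_mem_Icc.mpr hab.le))
  have hmom (j : ℕ) (hj : j < n) :
      |∫ t in a..b, (g - p).eval t * ((t - a) / (b - a)) ^ j| ≤ (b - a) * ε := by
    set r : ℝ[X] := C ((b - a) ^ j)⁻¹ * (X - C a) ^ j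
    have hr (t : ℝ) : r.eval t = ((t - a) / (b - a)) ^ j := by
      simp [r, div_eq_inv_mul, mul_pow]
    have hrdeg : r.natDegree < n := by
      refine lt_of_le_of_lt ?_ hj
      simp only [r]
      compute_degree
    have hsplit : ∫ t in a..b, (g - p).eval t * ((t - a) / (b - a)) ^ j =
        ∫ t in a..b, (w t - p.eval t) * r.eval t := by
      have hw' : ContinuousOn w (uIcc a b) := by rwa [uIcc_of_le hab.le]
      rw [← zero_add (∫ t in a..b, (w t - p.eval t) * r.eval t), ← horth r hrdeg,
        ← intervalIntegral.integral_add (ContinuousOn.intervalIntegrable (by fun_prop))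
          (ContinuousOn.intervalIntegrable (by fun_prop))]
      refine intervalIntegral.integral_congr fun t _ => ?_
      simp only [eval_sub, hr]
      ring
    rw [hsplit, ← Real.norm_eq_abs, mul_comm, ← abs_of_pos (sub_pos.mpr hab)]
    refine intervalIntegral.norm_integral_le_of_norm_le_const fun t ht => ?_
    have ht' : t ∈ Icc a b := Ioc_subset_Icc_self (by rwa [uIoc_of_le hab.le] at ht)
    obtain ⟨hs0, hs1⟩ := sub_div_sub_mem_Icc hab ht'
    rw [Real.norm_eq_abs, abs_mul, hr, abs_of_nonneg (pow_nonneg hs0 j)]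
    exact (mul_le_of_le_one_right (abs_nonneg _) (pow_le_one₀ hs0 hs1)).trans (hε t ht')
  have hgp := hK a b hab (g - p) ((natDegree_sub_le_of_le hg hp).trans_eq (max_self n))
    (by simp [hgb, hpb]) ε hε0 hmom t ht
  rw [eval_sub] at hgp
  calc |w t - g.eval t| ≤ |w t - p.eval t| + |g.eval t - p.eval t| := by
        rw [← abs_neg (g.eval t - p.eval t)]; exact (abs_add_le _ _).trans_eq' (by ring_nf)
    _ ≤ (1 + K) * ε := by linarith [hε t ht]

end Polynomial

theorem projection_approximation_L2_general (q m : ℕ) (hm1 : 1 ≤ m) (hmq : m ≤ q) :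
    ∃ C : ℝ, 0 < C ∧ ∀ a b : ℝ, a < b → ∀ w : ℝ → ℝ,
      ContDiffOn ℝ m w (Set.Icc a b) →
      ∀ g : Polynomial ℝ, g.natDegree ≤ q - 1 → g.eval b = w b →
        (∀ r : Polynomial ℝ, r.natDegree ≤ q - 2 →
          ∫ t in Set.Ioo a b, (g.eval t - w t) * r.eval t = 0) →
        Real.sqrt (∫ t in Set.Ioo a b, (w t - g.eval t) ^ 2) ≤
          C * (b - a) ^ m *
            Real.sqrt (∫ t in Set.Ioo a b,
              (iteratedDerivWithin m w (Set.Icc a b) t) ^ 2) := by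
  obtain ⟨n, rfl⟩ : ∃ n, m = n + 1 := ⟨m - 1, by omega⟩
  obtain ⟨K, hK0, hK⟩ := exists_abs_sub_eval_le_of_integral_mul_eq_zero (q - 1)
  refine ⟨(1 + K) / n !, by positivity, fun a b hab w hw g hg hgb horth => ?_⟩
  simp only [← integral_Ioc_eq_integral_Ioo, ← intervalIntegral.integral_of_le hab.le] at horth ⊢
  obtain ⟨p, hp, hpx⟩ := exists_natDegree_le_eval_eq_taylorWithinEval w n (Icc a b) b
  set ε := (b - a) ^ n / n ! * ∫ t in a..b, |iteratedDerivWithin (n + 1) w (Icc a b) t|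
  have hwg : ∀ t ∈ Icc a b, |w t - g.eval t| ≤ (1 + K) * ε :=
    hK a b hab w hw.continuousOn g p hg (by omega) hgb (by simp [hpx])
      (fun r hr => horth r (by omega)) ε
      (fun t ht => by rw [hpx]; exact abs_sub_taylorWithinEval_le hab hw ht)
  have hε : ε ≤ (b - a) ^ n / n ! * (√(b - a) *
      √(∫ t in a..b, iteratedDerivWithin (n + 1) w (Icc a b) t ^ 2)) :=
    mul_le_mul_of_nonneg_left (intervalIntegral.integral_abs_le_sqrt_mul_sqrt hab
      (hw.continuousOn_iteratedDerivWithin le_rfl (uniqueDiffOn_Icc hab))) (by positivity)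
  calc √(∫ t in a..b, (w t - g.eval t) ^ 2) ≤ √(b - a) * ((1 + K) * ε) :=
        intervalIntegral.sqrt_integral_sq_le hab.le
          (hw.continuousOn.sub g.continuous.continuousOn) hwg
    _ ≤ √(b - a) * ((1 + K) * ((b - a) ^ n / n ! * (√(b - a) *
          √(∫ t in a..b, iteratedDerivWithin (n + 1) w (Icc a b) t ^ 2)))) := by gcongr
    _ = (1 + K) / n ! * (b - a) ^ (n + 1) *
          √(∫ t in a..b, iteratedDerivWithin (n + 1) w (Icc a b) t ^ 2) := by
        linear_combination (1 + K) / n ! * (b - a) ^ n *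
          √(∫ t in a..b, iteratedDerivWithin (n + 1) w (Icc a b) t ^ 2) *
          Real.mul_self_sqrt (sub_pos.mpr hab).le

/-- Approximation property: for `q ≥ 2` and `1 ≤ m ≤ q` there is `C > 0`, depending only on
`q` and `m`, such that for all `a < b`, every `m`-times continuously differentiable
`w : [a, b] → ℝ`, and every polynomial `g` of degree at most `q − 1` with `g(b) = w(b)` and
`∫_a^b (g − w) r dt = 0` for all polynomials `r` of degree at most `q − 2`, one has
`‖w − g‖_{L²(a,b)} ≤ C (b−a)^m ‖w^{(m)}‖_{L²(a,b)}`. -/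
theorem projection_approximation_L2 (q m : ℕ) (hq : 2 ≤ q) (hm1 : 1 ≤ m) (hmq : m ≤ q) :
    ∃ C : ℝ, 0 < C ∧ ∀ a b : ℝ, a < b → ∀ w : ℝ → ℝ,
      ContDiffOn ℝ m w (Set.Icc a b) →
      ∀ g : Polynomial ℝ, g.natDegree ≤ q - 1 → g.eval b = w b →
        (∀ r : Polynomial ℝ, r.natDegree ≤ q - 2 →
          ∫ t in Set.Ioo a b, (g.eval t - w t) * r.eval t = 0) →
        Real.sqrt (∫ t in Set.Ioo a b, (w t - g.eval t) ^ 2) ≤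
          C * (b - a) ^ m *
            Real.sqrt (∫ t in Set.Ioo a b,
              (iteratedDerivWithin m w (Set.Icc a b) t) ^ 2) :=
  projection_approximation_L2_general q m hm1 hmq
end

section
/- Let q ≥ 2 be an integer. There exists a constant C > 0, depending only on q, such that for all real numbers a < b, every continuous function w : [a, b] → ℝ, and every real polynomial g of degree at most q − 1 satisfying g(b) = w(b) and ∫_a^b (g(t) − w(t))·r(t) dt = 0 for every real polynomial r of degree at most q − 2, one has sup_{t ∈ [a, b]} |g(t)| ≤ C·sup_{t ∈ [a, b]} |w(t)|. -/
/-!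
After the affine change of variables `t = a + (b - a) s` it suffices to work on `[0, 1]`.
There the coefficient vector of a polynomial `p` of degree at most `n` is mapped by a fixed
matrix to the data `∫₀¹ p(s) sᵏ ds` (`k < n`) and `p(1)`; for `p = g ∘ affine` these data equal
`∫₀¹ w sᵏ` and `w(1)`, hence are bounded by `sup |w|`, and the inverse matrix bounds the
coefficients, hence `sup |g|`. The matrix is invertible: if all these data vanish, then
`p = (X - 1) h` with `deg h < n`, so `∫₀¹ (1 - s) h(s)² ds = -∫₀¹ p h = 0` and `h = 0`.
-/

open MeasureTheory Polynomial Set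
open scoped Matrix

namespace Polynomial

theorem integral_eval_mul_pow {n : ℕ} {p : ℝ[X]} (hp : p.natDegree ≤ n) (k : ℕ) :
    ∫ s in (0 : ℝ)..1, p.eval s * s ^ k = ∑ j : Fin (n + 1), p.coeff j / ((j : ℕ) + k + 1) := by
  have hterm : ∀ s : ℝ, p.eval s * s ^ k = ∑ j : Fin (n + 1), p.coeff j * s ^ ((j : ℕ) + k) := by
    intro s
    rw [eval_eq_sum_range' (Nat.lt_succ_of_le hp), Finset.sum_mul, ← Fin.sum_univ_eq_sum_range]
    simp only [pow_add, mul_assoc]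
  simp only [hterm]
  rw [intervalIntegral.integral_finsetSum fun j _ =>
    (by fun_prop : Continuous _).intervalIntegrable _ _]
  refine Finset.sum_congr rfl fun j _ => ?_
  rw [intervalIntegral.integral_const_mul, integral_pow]
  push_cast
  ring

theorem integral_mul_eq_zero_of_moments {a b : ℝ} {n : ℕ} {p r : ℝ[X]}
    (hmom : ∀ k < n, ∫ s in a..b, p.eval s * s ^ k = 0) (hr : r.natDegree < n) :
    ∫ s in a..b, p.eval s * r.eval s = 0 := by
  have hterm : ∀ s : ℝ, p.eval s * r.eval s
      = ∑ k ∈ Finset.range n, r.coeff k * (p.eval s * s ^ k) := by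
    intro s
    rw [eval_eq_sum_range' hr, Finset.mul_sum]
    exact Finset.sum_congr rfl fun k _ => by ring
  simp only [hterm]
  rw [intervalIntegral.integral_finsetSum fun k _ =>
    (by fun_prop : Continuous _).intervalIntegrable _ _]
  refine Finset.sum_eq_zero fun k hk => ?_
  rw [intervalIntegral.integral_const_mul, hmom k (Finset.mem_range.mp hk), mul_zero]

theorem eq_zero_of_integral_one_sub_mul_sq {h : ℝ[X]}
    (hint : ∫ s in (0 : ℝ)..1, (1 - s) * h.eval s ^ 2 = 0) : h = 0 := by
  have hcont : Continuous fun s : ℝ => (1 - s) * h.eval s ^ 2 := by fun_prop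
  have hae : (fun s : ℝ => (1 - s) * h.eval s ^ 2) =ᵐ[volume.restrict (Ioc 0 1)] 0 := by
    refine (intervalIntegral.integral_eq_zero_iff_of_le_of_nonneg_ae zero_le_one ?_
      (hcont.intervalIntegrable _ _)).mp hint
    refine ae_restrict_of_forall_mem measurableSet_Ioc fun s hs => ?_
    have : 0 ≤ 1 - s := sub_nonneg.mpr hs.2
    positivity
  have hzero := Measure.eqOn_Ioc_of_ae_eq _ hae hcont.continuousOn continuousOn_const
  refine eq_zero_of_infinite_isRoot h ((Ioo_infinite zero_lt_one).mono fun s hs => ?_)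
  have := hzero (Ioo_subset_Ioc_self hs)
  have h1 : (1 - s) ≠ 0 := sub_ne_zero.mpr hs.2.ne'
  simpa [h1] using this

theorem eq_zero_of_moments_of_eval_one {n : ℕ} {p : ℝ[X]} (hp : p.natDegree ≤ n)
    (hmom : ∀ k < n, ∫ s in (0 : ℝ)..1, p.eval s * s ^ k = 0) (h1 : p.eval 1 = 0) : p = 0 := by
  set h := p /ₘ (X - C 1)
  have hfac : (X - C 1) * h = p := mul_divByMonic_eq_iff_isRoot.mpr h1
  suffices h = 0 by rw [← hfac, this, mul_zero]
  by_contra hne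
  have hdeg : h.natDegree < n := by
    have := natDegree_mul (X_sub_C_ne_zero (1 : ℝ)) hne
    rw [hfac, natDegree_X_sub_C] at this
    omega
  apply hne
  apply eq_zero_of_integral_one_sub_mul_sq
  calc ∫ s in (0 : ℝ)..1, (1 - s) * h.eval s ^ 2
      = ∫ s in (0 : ℝ)..1, -(p.eval s * h.eval s) := by
        refine intervalIntegral.integral_congr fun s _ => ?_
        simp only [← hfac, eval_mul, eval_sub, eval_X, eval_C]
        ring
    _ = 0 := by rw [intervalIntegral.integral_neg, integral_mul_eq_zero_of_moments hmom hdeg,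
        neg_zero]

theorem abs_eval_le_sum_abs_coeff {n : ℕ} {p : ℝ[X]} (hp : p.natDegree ≤ n) {s : ℝ}
    (hs : |s| ≤ 1) : |p.eval s| ≤ ∑ j : Fin (n + 1), |p.coeff j| := by
  rw [eval_eq_sum_range' (Nat.lt_succ_of_le hp), ← Fin.sum_univ_eq_sum_range]
  refine (Finset.abs_sum_le_sum_abs _ _).trans (Finset.sum_le_sum fun j _ => ?_)
  rw [abs_mul, abs_pow]
  exact mul_le_of_le_one_right (abs_nonneg _) (pow_le_one₀ (abs_nonneg s) hs)

end Polynomial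

theorem Matrix.sum_abs_mulVec_le {m n : Type*} [Fintype m] [Fintype n] (B : Matrix m n ℝ)
    {y : n → ℝ} {M : ℝ} (hy : ∀ j, |y j| ≤ M) :
    ∑ i, |(B *ᵥ y) i| ≤ (∑ i, ∑ j, |B i j|) * M := by
  rw [Finset.sum_mul]
  refine Finset.sum_le_sum fun i _ => ?_
  rw [Finset.sum_mul]
  refine (Finset.abs_sum_le_sum_abs _ _).trans (Finset.sum_le_sum fun j _ => ?_)
  rw [abs_mul]
  exact mul_le_mul_of_nonneg_left (hy j) (abs_nonneg _)

noncomputable def momentMatrix (n : ℕ) : Matrix (Fin (n + 1)) (Fin (n + 1)) ℝ :=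
  Matrix.of fun k j => if (k : ℕ) < n then 1 / ((j : ℕ) + (k : ℕ) + 1) else 1

theorem momentMatrix_mulVec_coeff {n : ℕ} {p : ℝ[X]} (hp : p.natDegree ≤ n) (k : Fin (n + 1)) :
    (momentMatrix n *ᵥ fun j => p.coeff j) k =
      if (k : ℕ) < n then ∫ s in (0 : ℝ)..1, p.eval s * s ^ (k : ℕ) else p.eval 1 := by
  split_ifs with hk
  · simp only [integral_eval_mul_pow hp, Matrix.mulVec, dotProduct, momentMatrix, Matrix.of_apply,
      if_pos hk, div_eq_inv_mul, mul_one]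
  · simp only [eval_eq_sum_range' (Nat.lt_succ_of_le hp), ← Fin.sum_univ_eq_sum_range,
      Matrix.mulVec, dotProduct, momentMatrix, Matrix.of_apply, if_neg hk, one_pow, mul_one,
      one_mul]

theorem isUnit_momentMatrix (n : ℕ) : IsUnit (momentMatrix n) := by
  rw [← Matrix.mulVec_injective_iff_isUnit, ← Matrix.coe_mulVecLin, ← LinearMap.ker_eq_bot,
    LinearMap.ker_eq_bot']
  intro v hv
  obtain ⟨⟨p, hp⟩, rfl⟩ := (degreeLTEquiv ℝ (n + 1)).surjective v
  rw [degreeLT_succ_eq_degreeLE, mem_degreeLE, ← natDegree_le_iff_degree_le] at hp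
  have hmv : ∀ k, (momentMatrix n *ᵥ fun j => p.coeff j) k = 0 := congrFun hv
  have hp0 : p = 0 := by
    refine eq_zero_of_moments_of_eval_one hp (fun k hk => ?_) ?_
    · simpa [momentMatrix_mulVec_coeff hp, hk] using hmv ⟨k, by omega⟩
    · simpa [momentMatrix_mulVec_coeff hp] using hmv (Fin.last n)
  subst hp0
  rfl

noncomputable def stabilityConst (n : ℕ) : ℝ :=
  ∑ i, ∑ j, |(momentMatrix n)⁻¹ i j|

theorem Polynomial.abs_eval_le_stabilityConst_mul {n : ℕ} {p : ℝ[X]} (hp : p.natDegree ≤ n)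
    {M : ℝ} (hmom : ∀ k < n, |∫ s in (0 : ℝ)..1, p.eval s * s ^ k| ≤ M) (h1 : |p.eval 1| ≤ M)
    {s : ℝ} (hs : |s| ≤ 1) : |p.eval s| ≤ stabilityConst n * M := by
  set A := momentMatrix n
  set x : Fin (n + 1) → ℝ := fun j => p.coeff j
  have hx : A⁻¹ *ᵥ (A *ᵥ x) = x := by
    rw [Matrix.mulVec_mulVec,
      Matrix.nonsing_inv_mul _ ((Matrix.isUnit_iff_isUnit_det A).mp (isUnit_momentMatrix n)),
      Matrix.one_mulVec]
  have hAx : ∀ k, |(A *ᵥ x) k| ≤ M := by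
    intro k
    rw [momentMatrix_mulVec_coeff hp]
    split_ifs with hk
    exacts [hmom k hk, h1]
  calc |p.eval s| ≤ ∑ j, |x j| := abs_eval_le_sum_abs_coeff hp hs
    _ = ∑ j, |(A⁻¹ *ᵥ (A *ᵥ x)) j| := by rw [hx]
    _ ≤ stabilityConst n * M := Matrix.sum_abs_mulVec_le _ hAx

theorem abs_integral_mul_pow_le {v : ℝ → ℝ} {M : ℝ} (hv : ∀ s ∈ Icc (0 : ℝ) 1, |v s| ≤ M)
    (k : ℕ) : |∫ s in (0 : ℝ)..1, v s * s ^ k| ≤ M := by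
  have := intervalIntegral.norm_integral_le_of_norm_le_const (a := 0) (b := 1)
    (f := fun s => v s * s ^ k) (C := M) fun s hs => by
      rw [uIoc_of_le zero_le_one] at hs
      rw [Real.norm_eq_abs, abs_mul, abs_pow, abs_of_pos hs.1]
      calc |v s| * s ^ k ≤ |v s| :=
            mul_le_of_le_one_right (abs_nonneg _) (pow_le_one₀ hs.1.le hs.2)
        _ ≤ M := hv s (Ioc_subset_Icc_self hs)
  simpa using this

theorem sub_mul_add_mem_Icc {a b s : ℝ} (hab : a ≤ b) (hs : s ∈ Icc (0 : ℝ) 1) :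
    (b - a) * s + a ∈ Icc a b := by
  constructor <;> nlinarith [hs.1, hs.2]

theorem integral_comp_affine_eval_mul_pow {a b : ℝ} (hab : a < b) {w : ℝ → ℝ}
    (hw : ContinuousOn w (Icc a b)) {g : ℝ[X]} {k : ℕ}
    (horth : ∫ t in Ioo a b, (g.eval t - w t) * ((b - a)⁻¹ * (t - a)) ^ k = 0) :
    ∫ s in (0 : ℝ)..1, (g.comp (C (b - a) * X + C a)).eval s * s ^ k =
      ∫ s in (0 : ℝ)..1, w ((b - a) * s + a) * s ^ k := by
  have hc : b - a ≠ 0 := sub_ne_zero.mpr hab.ne'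
  set f := fun t => (g.eval t - w t) * ((b - a)⁻¹ * (t - a)) ^ k
  have hf : ∫ s in (0 : ℝ)..1, f ((b - a) * s + a) = 0 := by
    rw [intervalIntegral.integral_comp_mul_add f hc, mul_zero, zero_add, mul_one, sub_add_cancel,
      intervalIntegral.integral_of_le hab.le, integral_Ioc_eq_integral_Ioo, horth, smul_zero]
  have hw_int : IntervalIntegrable (fun s => w ((b - a) * s + a) * s ^ k) volume 0 1 := by
    refine ContinuousOn.intervalIntegrable ?_
    rw [uIcc_of_le zero_le_one]
    exact (hw.comp (by fun_prop) fun s hs => sub_mul_add_mem_Icc hab.le hs).mul (by fun_prop)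
  have hsplit := intervalIntegral.integral_sub
    ((by fun_prop : Continuous fun s => (g.comp (C (b - a) * X + C a)).eval s * s ^ k)
      |>.intervalIntegrable 0 1) hw_int
  rw [← sub_eq_zero, ← hsplit]
  refine (intervalIntegral.integral_congr fun s _ => ?_).trans hf
  simp only [f, eval_comp, eval_add, eval_mul, eval_C, eval_X, add_sub_cancel_right,
    inv_mul_cancel_left₀ hc]
  ring

theorem abs_integral_comp_affine_eval_mul_pow_le {a b M : ℝ} (hab : a < b) {w : ℝ → ℝ}
    (hw : ContinuousOn w (Icc a b)) (hM : ∀ s ∈ Icc a b, |w s| ≤ M) {g : ℝ[X]} {k : ℕ}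
    (horth : ∀ r : ℝ[X], r.natDegree ≤ k → ∫ t in Ioo a b, (g.eval t - w t) * r.eval t = 0) :
    |∫ s in (0 : ℝ)..1, (g.comp (C (b - a) * X + C a)).eval s * s ^ k| ≤ M := by
  have hr : ((C (b - a)⁻¹ * (X - C a)) ^ k).natDegree ≤ k := by
    have hlin : (C (b - a)⁻¹ * (X - C a)).natDegree ≤ 1 :=
      (natDegree_C_mul_le _ _).trans (natDegree_X_sub_C a).le
    exact natDegree_pow_le.trans ((Nat.mul_le_mul_left k hlin).trans_eq (mul_one k))
  rw [integral_comp_affine_eval_mul_pow hab hw (by simpa using horth _ hr)]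
  exact abs_integral_mul_pow_le (fun s hs => hM _ (sub_mul_add_mem_Icc hab.le hs)) k

theorem projection_stability_sup_general (q : ℕ) :
    ∃ C : ℝ, 0 < C ∧ ∀ a b : ℝ, a < b → ∀ w : ℝ → ℝ,
      ContinuousOn w (Set.Icc a b) →
      ∀ g : Polynomial ℝ, g.natDegree ≤ q - 1 → g.eval b = w b →
        (∀ r : Polynomial ℝ, r.natDegree ≤ q - 2 →
          ∫ t in Set.Ioo a b, (g.eval t - w t) * r.eval t = 0) →
        ∀ t ∈ Set.Icc a b, |g.eval t| ≤
          C * sSup ((fun s => |w s|) '' Set.Icc a b) := by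
  have hK : 0 ≤ stabilityConst (q - 1) := by unfold stabilityConst; positivity
  refine ⟨stabilityConst (q - 1) + 1, by positivity, ?_⟩
  intro a b hab w hw g hg hgb horth t ht
  set M := sSup ((fun s => |w s|) '' Icc a b)
  have hM : ∀ s ∈ Icc a b, |w s| ≤ M := fun s hs =>
    le_csSup (isCompact_Icc.bddAbove_image hw.abs) ⟨s, hs, rfl⟩
  have hb : b ∈ Icc a b := right_mem_Icc.mpr hab.le
  set g₀ := g.comp (C (b - a) * X + C a)
  have hg₀ : ∀ s, g₀.eval s = g.eval ((b - a) * s + a) := by simp [g₀]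
  have hdeg : g₀.natDegree ≤ q - 1 :=
    natDegree_comp_le.trans ((Nat.mul_le_mul hg natDegree_linear_le).trans_eq (mul_one _))
  have hmom : ∀ k < q - 1, |∫ s in (0 : ℝ)..1, g₀.eval s * s ^ k| ≤ M := fun k hk =>
    abs_integral_comp_affine_eval_mul_pow_le hab hw hM fun r hr => horth r (by omega)
  have h1 : |g₀.eval 1| ≤ M := by
    rw [hg₀, mul_one, sub_add_cancel, hgb]
    exact hM b hb
  have hs : |(t - a) / (b - a)| ≤ 1 := by
    rw [abs_of_nonneg (div_nonneg (sub_nonneg.mpr ht.1) (sub_nonneg.mpr hab.le))]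
    exact div_le_one_of_le₀ (by linarith [ht.2]) (sub_nonneg.mpr hab.le)
  calc |g.eval t| = |g₀.eval ((t - a) / (b - a))| := by
        rw [hg₀, mul_div_cancel₀ _ (sub_ne_zero.mpr hab.ne'), sub_add_cancel]
    _ ≤ stabilityConst (q - 1) * M := abs_eval_le_stabilityConst_mul hdeg hmom h1 hs
    _ ≤ (stabilityConst (q - 1) + 1) * M :=
        mul_le_mul_of_nonneg_right (le_add_of_nonneg_right zero_le_one)
          ((abs_nonneg _).trans (hM b hb))

/-- Stability: for `q ≥ 2` there is `C > 0`, depending only on `q`, such that for all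
`a < b`, every continuous `w : [a, b] → ℝ`, and every polynomial `g` of degree at most
`q − 1` with `g(b) = w(b)` and `∫_a^b (g − w) r dt = 0` for all polynomials `r` of degree at
most `q − 2`, one has `sup_{[a,b]} |g| ≤ C sup_{[a,b]} |w|`. -/
theorem projection_stability_sup (q : ℕ) (hq : 2 ≤ q) :
    ∃ C : ℝ, 0 < C ∧ ∀ a b : ℝ, a < b → ∀ w : ℝ → ℝ,
      ContinuousOn w (Set.Icc a b) →
      ∀ g : Polynomial ℝ, g.natDegree ≤ q - 1 → g.eval b = w b →
        (∀ r : Polynomial ℝ, r.natDegree ≤ q - 2 →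
          ∫ t in Set.Ioo a b, (g.eval t - w t) * r.eval t = 0) →
        ∀ t ∈ Set.Icc a b, |g.eval t| ≤
          C * sSup ((fun s => |w s|) '' Set.Icc a b) :=
  projection_stability_sup_general q
end

section
/- Let r ≥ 0 be an integer and s ∈ [1, ∞]. There exists a constant C > 0, depending only on r and s, such that for all real numbers a < b, every continuous function ψ : [a, b] → ℝ, and every real polynomial g of degree at most r satisfying ∫_a^b (ψ(t) − g(t))·t^j dt = 0 for every integer j with 0 ≤ j ≤ r, one has ‖g‖_{L^s(a,b)} ≤ C·‖ψ‖_{L^s(a,b)}. -/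
/-!
Rescaling `[a, b]` to `[0, 1]` and using that all norms on the finite-dimensional space of
polynomials of degree `≤ r` are equivalent gives `(b - a) g(t)² ≤ K ∫_a^b g²` on
`[a, b]`. Orthogonality of `ψ - g` to `g` gives `∫ g² = ∫ ψ g ≤ (max |g|) ‖ψ‖₁`, hence
`(b - a) max |g| ≤ K ‖ψ‖₁`. Finally `‖g‖_s ≤ (b - a)^{1/s} max |g|`, and Hölder's
inequality `‖ψ‖₁ ≤ (b - a)^{1 - 1/s} ‖ψ‖_s` turns this into `‖g‖_s ≤ K ‖ψ‖_s`.
-/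

open MeasureTheory Set Polynomial
open scoped ENNReal

theorem exists_pos_mul_norm_sq_le {E : Type*} [NormedAddCommGroup E] [NormedSpace ℝ E]
    [FiniteDimensional ℝ E] {Q : E → ℝ} (hQ : Continuous Q)
    (hsmul : ∀ (l : ℝ) (x : E), Q (l • x) = l ^ 2 * Q x) (hpos : ∀ x ≠ 0, 0 < Q x) :
    ∃ m, 0 < m ∧ ∀ x, m * ‖x‖ ^ 2 ≤ Q x := by
  have hQ0 : Q 0 = 0 := by simpa using hsmul 0 0
  rcases subsingleton_or_nontrivial E with hE | hE
  · exact ⟨1, one_pos, fun x => by simp [Subsingleton.elim x 0, hQ0]⟩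
  obtain ⟨x₀, hx₀, hmin⟩ := (isCompact_sphere (0 : E) 1).exists_isMinOn
    (NormedSpace.sphere_nonempty.2 zero_le_one) hQ.continuousOn
  refine ⟨Q x₀, hpos x₀ (ne_zero_of_mem_unit_sphere ⟨x₀, hx₀⟩), fun x => ?_⟩
  rcases eq_or_ne x 0 with rfl | hx
  · simp [hQ0]
  have hnx : 0 < ‖x‖ := norm_pos_iff.2 hx
  have hQx : Q x₀ ≤ ‖x‖⁻¹ ^ 2 * Q x := by
    rw [← hsmul]
    exact hmin (by simp [norm_smul, hnx.ne'])
  calc Q x₀ * ‖x‖ ^ 2 ≤ ‖x‖⁻¹ ^ 2 * Q x * ‖x‖ ^ 2 := by gcongr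
    _ = Q x := by field_simp

theorem eLpNorm_le_mul_eLpNorm_of_ae_enorm_mul_measure_le {α E F : Type*} [MeasurableSpace α]
    {μ : Measure α} [IsFiniteMeasure μ] [NormedAddCommGroup E] [NormedAddCommGroup F]
    {f : α → E} {g : α → F} {s C : ℝ≥0∞} (hs : 1 ≤ s) (hg : AEStronglyMeasurable g μ)
    (hfg : ∀ᵐ x ∂μ, ‖f x‖ₑ * μ univ ≤ C * eLpNorm g 1 μ) :
    eLpNorm f s μ ≤ C * eLpNorm g s μ := by
  rcases eq_zero_or_neZero μ with rfl | hμ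
  · simp
  set V := μ univ
  have hV0 : V ≠ 0 := (Measure.measure_univ_ne_zero).2 hμ.out
  have hVtop : V ≠ ⊤ := measure_ne_top μ univ
  have hf : ∀ᵐ x ∂μ, ‖f x‖ₑ ≤ C * eLpNorm g 1 μ / V :=
    hfg.mono fun x hx => (ENNReal.le_div_iff_mul_le (.inl hV0) (.inl hVtop)).2 hx
  have hV : V ^ (1 - s.toReal⁻¹) * V ^ s.toReal⁻¹ = V := by
    rw [← ENNReal.rpow_add _ _ hV0 hVtop, sub_add_cancel, ENNReal.rpow_one]
  calc eLpNorm f s μ ≤ C * eLpNorm g 1 μ / V * V ^ s.toReal⁻¹ :=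
        eLpNorm_le_of_ae_enorm_bound hf
    _ ≤ C * (eLpNorm g s μ * V ^ (1 - s.toReal⁻¹)) / V * V ^ s.toReal⁻¹ := by
        gcongr; simpa using eLpNorm_le_eLpNorm_mul_rpow_measure_univ hs hg
    _ = C * eLpNorm g s μ := by
        rw [div_eq_mul_inv, mul_right_comm, mul_assoc (C * _), mul_assoc C, mul_assoc,
          ← mul_assoc (V ^ _), hV, ENNReal.mul_inv_cancel hV0 hVtop, mul_one]

theorem integral_mul_eval_eq_zero {μ : Measure ℝ} {f : ℝ → ℝ} {r : ℕ}
    (hint : ∀ j ≤ r, Integrable (fun t => f t * t ^ j) μ)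
    (horth : ∀ j ≤ r, ∫ t, f t * t ^ j ∂μ = 0) {p : ℝ[X]} (hp : p.natDegree ≤ r) :
    ∫ t, f t * p.eval t ∂μ = 0 := by
  have hr : ∀ j ∈ Finset.range (r + 1), j ≤ r := fun j hj =>
    Nat.lt_succ_iff.1 (Finset.mem_range.1 hj)
  simp_rw [eval_eq_sum_range' (Nat.lt_succ_of_le hp), Finset.mul_sum, mul_left_comm (f _)]
  rw [integral_finsetSum _ fun j hj => (hint j (hr j hj)).const_mul _]
  exact Finset.sum_eq_zero fun j hj => by rw [integral_const_mul, horth j (hr j hj), mul_zero]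

theorem abs_sum_mul_pow_le {n : ℕ} (c : Fin n → ℝ) {t : ℝ} (ht : |t| ≤ 1) :
    |∑ i, c i * t ^ (i : ℕ)| ≤ n * ‖c‖ :=
  calc |∑ i, c i * t ^ (i : ℕ)| ≤ ∑ i, |c i * t ^ (i : ℕ)| :=
        Finset.abs_sum_le_sum_abs _ _
    _ ≤ ∑ _i : Fin n, ‖c‖ := Finset.sum_le_sum fun i _ => by
        rw [abs_mul, abs_pow, ← Real.norm_eq_abs (c i)]
        exact mul_le_of_le_one_right (norm_nonneg _) (pow_le_one₀ (abs_nonneg t) ht)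
          |>.trans (norm_le_pi_norm c i)
    _ = n * ‖c‖ := by simp

theorem exists_pos_mul_norm_sq_le_integral_sq (n : ℕ) :
    ∃ m, 0 < m ∧ ∀ c : Fin n → ℝ,
      m * ‖c‖ ^ 2 ≤ ∫ t in (0:ℝ)..1, (∑ i, c i * t ^ (i : ℕ)) ^ 2 := by
  refine exists_pos_mul_norm_sq_le (by fun_prop) (fun l c => ?_) (fun c hc => ?_)
  · simp only [Pi.smul_apply, smul_eq_mul, mul_assoc, ← Finset.mul_sum, mul_pow,
      intervalIntegral.integral_const_mul]
  set p : ℝ[X] := ∑ i, C (c i) * X ^ (i : ℕ)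
  have hp : p ≠ 0 := by
    contrapose! hc
    ext i
    simpa [p, coeff_X_pow, finsetSum_coeff, Fin.val_eq_val] using congrArg (coeff · i) hc
  obtain ⟨t, ht, hpt⟩ : ∃ t ∈ Icc (0:ℝ) 1, p.eval t ≠ 0 := by
    by_contra! h
    exact hp (eq_zero_of_infinite_isRoot p ((Icc_infinite zero_lt_one).mono h))
  refine intervalIntegral.integral_pos zero_lt_one (by fun_prop) (fun _ _ => sq_nonneg _)
    ⟨t, ht, ?_⟩
  simpa [p, eval_finsetSum] using pow_pos (abs_pos.2 hpt) 2

theorem exists_sq_eval_le_mul_integral_sq_unitInterval (r : ℕ) :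
    ∃ K, 0 < K ∧ ∀ p : ℝ[X], p.natDegree ≤ r → ∀ t ∈ Icc (0:ℝ) 1,
      p.eval t ^ 2 ≤ K * ∫ u in (0:ℝ)..1, p.eval u ^ 2 := by
  obtain ⟨m, hm, hQ⟩ := exists_pos_mul_norm_sq_le_integral_sq (r + 1)
  refine ⟨(r + 1) ^ 2 / m, by positivity, fun p hp t ht => ?_⟩
  have heval : ∀ u, p.eval u = ∑ i : Fin (r + 1), p.coeff i * u ^ (i : ℕ) := fun u => by
    rw [eval_eq_sum_range' (Nat.lt_succ_of_le hp),
      Fin.sum_univ_eq_sum_range (fun i => p.coeff i * u ^ i)]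
  set c : Fin (r + 1) → ℝ := fun i => p.coeff i
  have hsup : |p.eval t| ≤ (r + 1) * ‖c‖ := by
    rw [heval]
    exact_mod_cast abs_sum_mul_pow_le c (abs_le.2 ⟨by linarith [ht.1], ht.2⟩)
  calc p.eval t ^ 2 = |p.eval t| ^ 2 := (sq_abs _).symm
    _ ≤ ((r + 1) * ‖c‖) ^ 2 := by gcongr
    _ = (r + 1) ^ 2 / m * (m * ‖c‖ ^ 2) := by field_simp
    _ ≤ (r + 1) ^ 2 / m * ∫ u in (0:ℝ)..1, p.eval u ^ 2 := by
        simp only [heval]; gcongr; exact hQ c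

theorem exists_sq_eval_mul_le_integral_sq (r : ℕ) :
    ∃ K, 0 < K ∧ ∀ a b : ℝ, a < b → ∀ p : ℝ[X], p.natDegree ≤ r →
      ∀ t ∈ Icc a b, p.eval t ^ 2 * (b - a) ≤ K * ∫ u in Ioo a b, p.eval u ^ 2 := by
  obtain ⟨K, hK, hunit⟩ := exists_sq_eval_le_mul_integral_sq_unitInterval r
  refine ⟨K, hK, fun a b hab p hp t ht => ?_⟩
  have hba : 0 < b - a := sub_pos.2 hab
  set q := p.comp (C (b - a) * X + C a)
  have hq : q.natDegree ≤ r :=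
    natDegree_comp_le.trans <| by
      simpa using Nat.mul_le_mul hp (natDegree_linear_le (a := b - a) (b := a))
  have hqeval : ∀ u, q.eval u = p.eval ((b - a) * u + a) := fun u => by simp [q]
  have hu : (t - a) / (b - a) ∈ Icc (0:ℝ) 1 := by
    constructor
    · exact div_nonneg (by linarith [ht.1]) hba.le
    · rw [div_le_one hba]; linarith [ht.2]
  have hint :
      ∫ u in (0:ℝ)..1, q.eval u ^ 2 = (b - a)⁻¹ * ∫ u in Ioo a b, p.eval u ^ 2 := by
    simp only [hqeval]
    rw [intervalIntegral.integral_comp_mul_add (fun u => p.eval u ^ 2) hba.ne', mul_zero,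
      zero_add, mul_one, sub_add_cancel, intervalIntegral.integral_of_le hab.le,
      integral_Ioc_eq_integral_Ioo, smul_eq_mul]
  have hqt := hunit q hq _ hu
  rw [hqeval, hint, mul_div_cancel₀ _ hba.ne', sub_add_cancel] at hqt
  calc p.eval t ^ 2 * (b - a)
        ≤ K * ((b - a)⁻¹ * ∫ u in Ioo a b, p.eval u ^ 2) * (b - a) := by gcongr
    _ = K * ∫ u in Ioo a b, p.eval u ^ 2 := by field_simp

theorem exists_abs_eval_mul_le_integral_abs (r : ℕ) :
    ∃ K, 0 < K ∧ ∀ a b : ℝ, a < b → ∀ ψ : ℝ → ℝ, IntegrableOn ψ (Ioo a b) →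
      ∀ g : ℝ[X], g.natDegree ≤ r → ∫ u in Ioo a b, (ψ u - g.eval u) * g.eval u = 0 →
      ∀ t ∈ Icc a b, |g.eval t| * (b - a) ≤ K * ∫ u in Ioo a b, |ψ u| := by
  obtain ⟨K, hK, hsq⟩ := exists_sq_eval_mul_le_integral_sq r
  refine ⟨K, hK, fun a b hab ψ hψ g hg horth t ht => ?_⟩
  obtain ⟨t₀, ht₀, hmax⟩ := isCompact_Icc.exists_isMaxOn (nonempty_Icc.2 hab.le)
    (g.continuous.abs.continuousOn (s := Icc a b))
  set M := |g.eval t₀|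
  have hψg : IntegrableOn (fun u => ψ u * g.eval u) (Ioo a b) :=
    hψ.mul_continuousOn_of_subset g.continuous.continuousOn measurableSet_Ioo isCompact_Icc
      Ioo_subset_Icc_self
  have hgg : IntegrableOn (fun u => g.eval u * g.eval u) (Ioo a b) :=
    (by fun_prop : Continuous fun u => g.eval u * g.eval u).integrableOn_Icc.mono_set
      Ioo_subset_Icc_self
  have henergy : ∫ u in Ioo a b, g.eval u ^ 2 = ∫ u in Ioo a b, ψ u * g.eval u := by
    simp_rw [sub_mul] at horth
    rw [integral_sub hψg hgg, sub_eq_zero] at horth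
    simp_rw [sq, horth]
  have hholder : ∫ u in Ioo a b, ψ u * g.eval u ≤ M * ∫ u in Ioo a b, |ψ u| := by
    rw [← integral_const_mul]
    refine setIntegral_mono_on hψg (hψ.abs.const_mul M) measurableSet_Ioo fun u hu => ?_
    calc ψ u * g.eval u ≤ |ψ u| * |g.eval u| := by rw [← abs_mul]; exact le_abs_self _
      _ ≤ M * |ψ u| := by rw [mul_comm]; gcongr; exact hmax (Ioo_subset_Icc_self hu)
  have hM : M * (M * (b - a)) ≤ M * (K * ∫ u in Ioo a b, |ψ u|) := by
    calc M * (M * (b - a)) = g.eval t₀ ^ 2 * (b - a) := by rw [← sq_abs]; ring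
      _ ≤ K * ∫ u in Ioo a b, g.eval u ^ 2 := hsq a b hab g hg t₀ ht₀
      _ ≤ K * (M * ∫ u in Ioo a b, |ψ u|) := by rw [henergy]; gcongr
      _ = M * (K * ∫ u in Ioo a b, |ψ u|) := by ring
  have hMbound : M * (b - a) ≤ K * ∫ u in Ioo a b, |ψ u| := by
    rcases (abs_nonneg (g.eval t₀)).eq_or_lt with hM0 | hMpos
    · have : 0 ≤ ∫ u in Ioo a b, |ψ u| :=
        setIntegral_nonneg measurableSet_Ioo fun _ _ => abs_nonneg _
      rw [show M = 0 from hM0.symm, zero_mul]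
      positivity
    · exact le_of_mul_le_mul_left hM hMpos
  exact (mul_le_mul_of_nonneg_right (hmax ht) (sub_nonneg.2 hab.le)).trans hMbound

/-- Stability of the `L²(a,b)`-orthogonal projection onto polynomials of degree at most `r`
in the `L^s` norm: there is `C > 0`, depending only on `r` and `s`, such that for all
`a < b`, continuous `ψ : [a, b] → ℝ`, and polynomial `g` of degree at most `r` with
`∫_a^b (ψ − g) t^j dt = 0` for all `0 ≤ j ≤ r`, one has `‖g‖_{L^s} ≤ C ‖ψ‖_{L^s}`. -/
theorem L2_projection_Ls_stability (r : ℕ) (s : ℝ≥0∞) (hs : 1 ≤ s) :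
    ∃ C : ℝ, 0 < C ∧ ∀ a b : ℝ, a < b → ∀ ψ : ℝ → ℝ,
      ContinuousOn ψ (Set.Icc a b) →
      ∀ g : Polynomial ℝ, g.natDegree ≤ r →
        (∀ j : ℕ, j ≤ r → ∫ t in Set.Ioo a b, (ψ t - g.eval t) * t ^ j = 0) →
        eLpNorm (fun t => g.eval t) s (volume.restrict (Set.Ioo a b)) ≤
          ENNReal.ofReal C * eLpNorm ψ s (volume.restrict (Set.Ioo a b)) := by
  obtain ⟨K, hK, hbound⟩ := exists_abs_eval_mul_le_integral_abs r
  refine ⟨K, hK, fun a b hab ψ hψ g hg horth => ?_⟩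
  have hψi : IntegrableOn ψ (Ioo a b) := hψ.integrableOn_Icc.mono_set Ioo_subset_Icc_self
  have hself : ∫ t in Ioo a b, (ψ t - g.eval t) * g.eval t = 0 :=
    integral_mul_eval_eq_zero (fun j _ => ((hψ.sub g.continuous.continuousOn).mul
      (continuous_pow j).continuousOn).integrableOn_Icc.mono_set Ioo_subset_Icc_self) horth hg
  refine eLpNorm_le_mul_eLpNorm_of_ae_enorm_mul_measure_le hs hψi.aestronglyMeasurable ?_
  filter_upwards [ae_restrict_mem measurableSet_Ioo] with t ht
  rw [Measure.restrict_apply_univ, Real.volume_Ioo, eLpNorm_one_eq_lintegral_enorm,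
    ← ofReal_integral_norm_eq_lintegral_enorm hψi, ← ENNReal.ofReal_mul hK.le,
    Real.enorm_eq_ofReal_abs, ← ENNReal.ofReal_mul (abs_nonneg _)]
  exact ENNReal.ofReal_le_ofReal (hbound a b hab ψ hψi g hg hself t (Ioo_subset_Icc_self ht))
end
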